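/- arXiv:2602.21494 — 6 statements merged into one kernel-verified Lean document; each statement's English description precedes it below -/
import Mathlib

section
/- Let q = 2^r be a power of 2 with r ≥ 3. Then there exist q/2 pairwise disjoint subsets S_1, …, S_{q/2} of 𝔽_q × 𝔽_q, each of cardinality 4, such that for all indices a and b (including a = b), no three pairwise distinct points of S_a ∪ S_b are collinear. In particular the union of the S_a is a 4-local arc of size 2q. -/
open Polynomial in
private lemma exists_t_aux (F : Type) [Field F] [Fintype F] (h8 : 8 ≤ Fintype.card F) :
    ∃ t : F, t ≠ 0 ∧ t ≠ 1 ∧ t * t + t + 1 ≠ 0 := by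
  classical
  by_contra h
  push_neg at h
  set p : F[X] := X * (X - 1) * (X ^ 2 + X + 1) with hp
  have hdeg : p.natDegree = 4 := by
    rw [hp]; compute_degree!
  have hpne : p ≠ 0 := fun h0 => by simp [h0] at hdeg
  have hroot : ∀ x : F, p.IsRoot x := by
    intro x
    simp only [hp, IsRoot, eval_mul, eval_sub, eval_add, eval_pow, eval_X, eval_one]
    by_cases hx0 : x = 0
    · simp [hx0]
    by_cases hx1 : x = 1
    · simp [hx1]
    · have := h x hx0 hx1
      have : x ^ 2 + x + 1 = 0 := by rw [pow_two]; exact this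
      simp [this]
  have hsub : (Finset.univ : Finset F) ⊆ p.roots.toFinset := by
    intro x _
    simp only [Multiset.mem_toFinset, mem_roots, hpne, ne_eq, not_false_iff, true_and]
    exact hroot x
  have : Fintype.card F ≤ 4 := by
    calc Fintype.card F = (Finset.univ : Finset F).card := (Finset.card_univ).symm
    _ ≤ p.roots.toFinset.card := Finset.card_le_card hsub
    _ ≤ Multiset.card p.roots := Multiset.toFinset_card_le _
    _ ≤ p.natDegree := p.card_roots'
    _ = 4 := hdeg
  omega

private lemma collinear_det {F : Type} [Field F] (p₁ p₂ p₃ : F × F)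
    (h : Collinear F ({p₁, p₂, p₃} : Set (F × F))) :
    (p₂.1 - p₁.1) * (p₃.2 - p₁.2) - (p₃.1 - p₁.1) * (p₂.2 - p₁.2) = 0 := by
  rw [collinear_iff_of_mem (Set.mem_insert p₁ _)] at h
  obtain ⟨v, hv⟩ := h
  obtain ⟨r₂, h₂⟩ := hv p₂ (by simp)
  obtain ⟨r₃, h₃⟩ := hv p₃ (by simp)
  rw [h₂, h₃]
  simp only [vadd_eq_add, Prod.smul_def, Prod.fst_add, Prod.snd_add, Prod.smul_fst, Prod.smul_snd, add_sub_cancel_right, smul_eq_mul]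
  ring

private lemma diff_mem {F : Type} [Field F] (hchar : (2 : F) = 0) (t : F)
    {u v : F} (hu : u = 0 ∨ u = 1 ∨ u = t ∨ u = t + 1)
    (hv : v = 0 ∨ v = 1 ∨ v = t ∨ v = t + 1) (huv : u ≠ v) :
    u - v = 1 ∨ u - v = t ∨ u - v = t + 1 := by
  rcases hu with h | h | h | h <;> rw [h] <;> rcases hv with h' | h' | h' | h' <;> rw [h'] <;>
    first
      | exact absurd (h.trans h'.symm) huv
      | (left; ring1)
      | (left; linear_combination -hchar)
      | (right; left; ring1)
      | (right; left; linear_combination -t * hchar)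
      | (right; right; ring1)
      | (right; right; linear_combination -hchar)
      | (right; right; linear_combination -t * hchar)
      | (right; right; linear_combination (-t - 1) * hchar)

private lemma phi_prod {F : Type} [Field F] (t : F) (φ : F →+ ZMod 2)
    (hφ1 : φ 1 = 0) (hφt : φ t = 1) (hφtt : φ (t * t) = 0)
    {u v : F} (hu : u = 1 ∨ u = t ∨ u = t + 1)
    (hv : v = 1 ∨ v = t ∨ v = t + 1) (huv : u ≠ v) : φ (u * v) = 1 := by
  rcases hu with rfl | rfl | rfl <;> rcases hv with rfl | rfl | rfl <;>
    first
      | exact absurd rfl huv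
      | simp [mul_add, add_mul, mul_one, one_mul, map_add, hφ1, hφt, hφtt]

private lemma lem_M {F : Type} [Field F] (hchar : (2 : F) = 0) (t : F) (φ : F →+ ZMod 2)
    (hφ1 : φ 1 = 0) (hφt : φ t = 1) (hφtt : φ (t * t) = 0)
    {u v w d : F} (hu : u = 0 ∨ u = 1 ∨ u = t ∨ u = t + 1)
    (hv : v = 0 ∨ v = 1 ∨ v = t ∨ v = t + 1) (hw : w = 0 ∨ w = 1 ∨ w = t ∨ w = t + 1)
    (huv : u ≠ v) (hd : d ≠ 0) (hφd : φ d = 0) : (w - u) * (w - v) ≠ d := by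
  by_cases hwu : w = u
  · intro h; exact hd (by rw [← h, hwu, sub_self, zero_mul])
  by_cases hwv : w = v
  · intro h; exact hd (by rw [← h, hwv, sub_self, mul_zero])
  · have h1 := diff_mem hchar t hw hu hwu
    have h2 := diff_mem hchar t hw hv hwv
    have hne : w - u ≠ w - v := fun h => huv (by
      have : u = v := by linear_combination -h
      exact this)
    intro h
    have := phi_prod t φ hφ1 hφt hφtt h1 h2 hne
    rw [h, hφd] at this
    exact absurd this (by decide)

private lemma lem_key {F : Type} [Field F] (hchar : (2 : F) = 0) (t : F) (φ : F →+ ZMod 2)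
    (hφ1 : φ 1 = 0) (hφt : φ t = 1) (hφtt : φ (t * t) = 0)
    {e₁ e₂ e₃ x₁ x₂ x₃ : F}
    (hφe₁ : φ e₁ = 0) (hφe₂ : φ e₂ = 0) (hφe₃ : φ e₃ = 0)
    (hee : e₁ = e₂ ∨ e₁ = e₃ ∨ e₂ = e₃)
    (hx₁ : x₁ = 0 ∨ x₁ = 1 ∨ x₁ = t ∨ x₁ = t + 1)
    (hx₂ : x₂ = 0 ∨ x₂ = 1 ∨ x₂ = t ∨ x₂ = t + 1)
    (hx₃ : x₃ = 0 ∨ x₃ = 1 ∨ x₃ = t ∨ x₃ = t + 1)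
    (hp₁₂ : ((x₁, x₁ * x₁ + e₁) : F × F) ≠ (x₂, x₂ * x₂ + e₂))
    (hp₁₃ : ((x₁, x₁ * x₁ + e₁) : F × F) ≠ (x₃, x₃ * x₃ + e₃))
    (hp₂₃ : ((x₂, x₂ * x₂ + e₂) : F × F) ≠ (x₃, x₃ * x₃ + e₃)) :
    (x₂ - x₁) * ((x₃ * x₃ + e₃) - (x₁ * x₁ + e₁))
      - (x₃ - x₁) * ((x₂ * x₂ + e₂) - (x₁ * x₁ + e₁)) ≠ 0 := by
  by_cases h12 : e₁ = e₂
  · have hx12 : x₁ ≠ x₂ := fun h => hp₁₂ (by rw [h, h12])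
    by_cases h13 : e₁ = e₃
    · -- all equal
      have hx13 : x₁ ≠ x₃ := fun h => hp₁₃ (by rw [h, h13])
      have hx23 : x₂ ≠ x₃ := fun h => hp₂₃ (by rw [h, ← h12, h13])
      subst h12; subst h13
      have hfac : (x₂ - x₁) * ((x₃ * x₃ + e₁) - (x₁ * x₁ + e₁))
          - (x₃ - x₁) * ((x₂ * x₂ + e₁) - (x₁ * x₁ + e₁))
          = (x₂ - x₁) * ((x₃ - x₁) * (x₃ - x₂)) := by ring
      rw [hfac]
      exact mul_ne_zero (sub_ne_zero.mpr hx12.symm)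
        (mul_ne_zero (sub_ne_zero.mpr hx13.symm) (sub_ne_zero.mpr hx23.symm))
    · -- e₁ = e₂ ≠ e₃
      subst h12
      have hd : e₁ - e₃ ≠ 0 := sub_ne_zero.mpr h13
      have hφd : φ (e₁ - e₃) = 0 := by rw [map_sub, hφe₁, hφe₃, sub_zero]
      have hM := lem_M hchar t φ hφ1 hφt hφtt hx₁ hx₂ hx₃ hx12 hd hφd
      intro hdet
      apply hM
      have hfac : (x₂ - x₁) * ((x₃ - x₁) * (x₃ - x₂) - (e₁ - e₃))
          = (x₂ - x₁) * ((x₃ * x₃ + e₃) - (x₁ * x₁ + e₁))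
            - (x₃ - x₁) * ((x₂ * x₂ + e₁) - (x₁ * x₁ + e₁)) := by ring
      have h0 : (x₂ - x₁) * ((x₃ - x₁) * (x₃ - x₂) - (e₁ - e₃)) = 0 := by rw [hfac, hdet]
      exact sub_eq_zero.mp ((mul_eq_zero.mp h0).resolve_left (sub_ne_zero.mpr hx12.symm))
  · by_cases h13 : e₁ = e₃
    · -- e₁ = e₃ ≠ e₂ : odd point is x₂
      subst h13
      have hx13 : x₁ ≠ x₃ := fun h => hp₁₃ (by rw [h])
      have hd : e₁ - e₂ ≠ 0 := sub_ne_zero.mpr h12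
      have hφd : φ (e₁ - e₂) = 0 := by rw [map_sub, hφe₁, hφe₂, sub_zero]
      have hM := lem_M hchar t φ hφ1 hφt hφtt hx₁ hx₃ hx₂ hx13 hd hφd
      intro hdet
      apply hM
      have hfac : -((x₃ - x₁) * ((x₂ - x₁) * (x₂ - x₃) - (e₁ - e₂)))
          = (x₂ - x₁) * ((x₃ * x₃ + e₁) - (x₁ * x₁ + e₁))
            - (x₃ - x₁) * ((x₂ * x₂ + e₂) - (x₁ * x₁ + e₁)) := by ring
      have h0 : (x₃ - x₁) * ((x₂ - x₁) * (x₂ - x₃) - (e₁ - e₂)) = 0 :=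
        neg_eq_zero.mp (hfac.trans hdet)
      exact sub_eq_zero.mp ((mul_eq_zero.mp h0).resolve_left (sub_ne_zero.mpr hx13.symm))
    · -- e₂ = e₃ ≠ e₁ : odd point is x₁
      have h23 : e₂ = e₃ := by tauto
      subst h23
      have hx23 : x₂ ≠ x₃ := fun h => hp₂₃ (by rw [h])
      have hd : e₂ - e₁ ≠ 0 := sub_ne_zero.mpr (Ne.symm h12)
      have hφd : φ (e₂ - e₁) = 0 := by rw [map_sub, hφe₂, hφe₁, sub_zero]
      have hM := lem_M hchar t φ hφ1 hφt hφtt hx₂ hx₃ hx₁ hx23 hd hφd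
      intro hdet
      apply hM
      have hfac : (x₃ - x₂) * ((x₁ - x₂) * (x₁ - x₃) - (e₂ - e₁))
          = (x₂ - x₁) * ((x₃ * x₃ + e₂) - (x₁ * x₁ + e₁))
            - (x₃ - x₁) * ((x₂ * x₂ + e₂) - (x₁ * x₁ + e₁)) := by ring
      have h0 : (x₃ - x₂) * ((x₁ - x₂) * (x₁ - x₃) - (e₂ - e₁)) = 0 := hfac.trans hdet
      exact sub_eq_zero.mp ((mul_eq_zero.mp h0).resolve_left (sub_ne_zero.mpr (Ne.symm hx23)))

private lemma exists_phi (F : Type) [Field F] [Module (ZMod 2) F] (t : F)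
    (ht0 : t ≠ 0) (ht1 : t ≠ 1) (htt : t * t + t + 1 ≠ 0) (h2 : (2 : F) = 0) :
    ∃ φ : F →ₗ[ZMod 2] ZMod 2, φ 1 = 0 ∧ φ t = 1 ∧ φ (t * t) = 0 := by
  classical
  have hz : ∀ z : ZMod 2, z = 0 ∨ z = 1 := by decide
  have hneg : ∀ b : F, -b = b := fun b =>
    neg_eq_of_add_eq_zero_left (by linear_combination b * h2)
  have li : LinearIndependent (ZMod 2) ![(1 : F), t, t * t] := by
    rw [Fintype.linearIndependent_iff]
    intro g hg
    rw [Fin.sum_univ_three] at hg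
    simp only [Matrix.cons_val_zero, Matrix.cons_val_one, Matrix.head_cons,
      Matrix.cons_val_two, Matrix.tail_cons] at hg
    have h0 := hz (g 0); have h1 := hz (g 1); have h2' := hz (g 2)
    have done : g 0 = 0 ∧ g 1 = 0 ∧ g 2 = 0 := by
      rcases h0 with h0 | h0 <;> rcases h1 with h1 | h1 <;> rcases h2' with h2' | h2' <;>
          rw [h0, h1, h2'] at hg <;>
          simp only [zero_smul, one_smul, zero_add, add_zero] at hg
      · exact ⟨h0, h1, h2'⟩
      · exact absurd hg (mul_ne_zero ht0 ht0)
      · exact absurd hg ht0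
      · have : t * (1 + t) = 0 := by linear_combination hg
        rcases mul_eq_zero.mp this with h | h
        · exact absurd h ht0
        · exact absurd (by linear_combination h - h2 : t = 1) ht1
      · exact absurd hg one_ne_zero
      · exfalso; apply ht1
        have : (t - 1) * (t + 1) = 0 := by linear_combination hg - h2
        rcases mul_eq_zero.mp this with h | h
        · exact sub_eq_zero.mp h
        · exact (by linear_combination h - h2 : t = 1)
      · exact absurd (by linear_combination hg - h2 : t = 1) ht1
      · exact absurd (by linear_combination hg : t * t + t + 1 = 0) htt
    intro i; fin_cases i <;> simp [done.1, done.2.1, done.2.2]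
  have hrange : ({(1 : F), t, t * t} : Set F) = Set.range ![(1 : F), t, t * t] := by
    ext x
    simp only [Set.mem_insert_iff, Set.mem_singleton_iff, Set.mem_range]
    constructor
    · rintro (rfl | rfl | rfl)
      exacts [⟨0, rfl⟩, ⟨1, rfl⟩, ⟨2, rfl⟩]
    · rintro ⟨i, rfl⟩
      fin_cases i <;> simp
  have sli : LinearIndepOn (ZMod 2) id ({(1 : F), t, t * t} : Set F) := by
    rw [hrange]
    exact (linearIndepOn_id_range_iff li.injective).mpr li
  let b := Module.Basis.extend sli
  have hmem1 : (1 : F) ∈ sli.extend (Set.subset_univ _) :=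
    sli.subset_extend _ (by simp)
  have hmemt : t ∈ sli.extend (Set.subset_univ _) :=
    sli.subset_extend _ (by simp)
  have hmemtt : t * t ∈ sli.extend (Set.subset_univ _) :=
    sli.subset_extend _ (by simp)
  let g : sli.extend (Set.subset_univ _) → ZMod 2 := fun i => if (i : F) = t then 1 else 0
  refine ⟨b.constr ℕ g, ?_, ?_, ?_⟩
  · calc (b.constr ℕ) g 1 = (b.constr ℕ) g (b ⟨1, hmem1⟩) := by
          rw [Module.Basis.extend_apply_self]
    _ = g ⟨1, hmem1⟩ := b.constr_basis ℕ g ⟨1, hmem1⟩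
    _ = 0 := if_neg (fun h => ht1 h.symm)
  · calc (b.constr ℕ) g t = (b.constr ℕ) g (b ⟨t, hmemt⟩) := by
          rw [Module.Basis.extend_apply_self]
    _ = g ⟨t, hmemt⟩ := b.constr_basis ℕ g ⟨t, hmemt⟩
    _ = 1 := if_pos rfl
  · have hne : t * t ≠ t := by
      intro h
      rcases mul_eq_zero.mp (by linear_combination h : t * (t - 1) = 0) with h' | h'
      · exact ht0 h'
      · exact ht1 (sub_eq_zero.mp h')
    calc (b.constr ℕ) g (t * t) = (b.constr ℕ) g (b ⟨t * t, hmemtt⟩) := by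
          rw [Module.Basis.extend_apply_self]
    _ = g ⟨t * t, hmemtt⟩ := b.constr_basis ℕ g ⟨t * t, hmemtt⟩
    _ = 0 := if_neg hne

private lemma exists_c (F : Type) [Field F] [Fintype F] [Module (ZMod 2) F]
    (φ : F →ₗ[ZMod 2] ZMod 2) (t : F) (hφt : φ t = 1) (n : ℕ)
    (hn : Fintype.card F = n * 2) :
    ∃ c : Fin n → F, Function.Injective c ∧ ∀ a, φ (c a) = 0 := by
  classical
  let K := {x : F // φ x = 0}
  let e : F ≃ K × ZMod 2 :=
    { toFun := fun x => (⟨x - φ x • t, by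
        rw [map_sub, map_smul, hφt, smul_eq_mul, mul_one, sub_self]⟩, φ x)
      invFun := fun p => p.1.1 + p.2 • t
      left_inv := fun x => by simp
      right_inv := fun p => by
        have h1 : φ (p.1.1 + p.2 • t) = p.2 := by
          rw [map_add, map_smul, hφt, smul_eq_mul, mul_one, p.1.2, zero_add]
        refine Prod.ext (Subtype.ext ?_) h1
        simp [h1] }
  have hcardK : Nat.card K * 2 = n * 2 := by
    calc Nat.card K * 2 = Nat.card K * Nat.card (ZMod 2) := by rw [Nat.card_zmod]
    _ = Nat.card (K × ZMod 2) := (Nat.card_prod _ _).symm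
    _ = Nat.card F := (Nat.card_congr e).symm
    _ = n * 2 := by rw [Nat.card_eq_fintype_card, hn]
  haveI : Fintype K := Fintype.ofFinite K
  have hK : Fintype.card K = n := by
    rw [← Nat.card_eq_fintype_card]; omega
  let e2 : K ≃ Fin n := Fintype.equivFinOfCardEq hK
  exact ⟨fun a => (e2.symm a : F), fun a b h => e2.symm.injective (Subtype.ext h),
    fun a => (e2.symm a).2⟩

set_option maxHeartbeats 1000000 in
/-- For `q = 2^r`, `r ≥ 3`, there exist `q/2` pairwise disjoint `4`-element subsets of
the affine plane `𝔽_q × 𝔽_q` such that for all indices `a` and `b` (including `a = b`),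
no three pairwise distinct points of `S a ∪ S b` are collinear.  In particular the union
of the sets is a `4`-local arc of size `2q`. -/
theorem stmt_3 (r : ℕ) (hr : 3 ≤ r) (F : Type) [Field F] [Fintype F]
    (hcard : Fintype.card F = 2 ^ r) :
    ∃ S : Fin (2 ^ (r - 1)) → Set (F × F),
      (∀ a b, a ≠ b → Disjoint (S a) (S b)) ∧
      (∀ a, (S a).ncard = 4) ∧
      (⋃ a, S a).ncard = 2 * 2 ^ r ∧
      ∀ a b, ∀ p₁ ∈ S a ∪ S b, ∀ p₂ ∈ S a ∪ S b, ∀ p₃ ∈ S a ∪ S b,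
        p₁ ≠ p₂ → p₁ ≠ p₃ → p₂ ≠ p₃ → ¬ Collinear F ({p₁, p₂, p₃} : Set (F × F)) := by
  classical
  -- characteristic 2
  haveI hCP : CharP F (ringChar F) := ringChar.charP F
  obtain ⟨n, hp, hcard'⟩ := FiniteField.card F (ringChar F)
  have hchar2' : ringChar F = 2 := by
    have hdvd : ringChar F ∣ 2 ^ r := by
      rw [← hcard, hcard']
      exact dvd_pow_self _ (by positivity)
    have := hp.dvd_of_dvd_pow hdvd
    exact (Nat.prime_dvd_prime_iff_eq hp Nat.prime_two).mp this
  haveI hC2 : CharP F 2 := hchar2' ▸ hCP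
  have h2 : (2 : F) = 0 := by
    have := CharP.cast_eq_zero F 2
    simpa using this
  -- choose t
  have h8 : 8 ≤ Fintype.card F := by
    rw [hcard]
    calc (8 : ℕ) = 2 ^ 3 := rfl
    _ ≤ 2 ^ r := Nat.pow_le_pow_right (by norm_num) hr
  obtain ⟨t, ht0, ht1, htt⟩ := exists_t_aux F h8
  -- the linear functional
  letI : Algebra (ZMod 2) F := ZMod.algebra F 2
  obtain ⟨φL, hφ1, hφt, hφtt⟩ := exists_phi F t ht0 ht1 htt h2
  set φ : F →+ ZMod 2 := φL.toAddMonoidHom with hφdef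
  have hφ1' : φ 1 = 0 := hφ1
  have hφt' : φ t = 1 := hφt
  have hφtt' : φ (t * t) = 0 := hφtt
  -- the translation constants
  obtain ⟨c, hcinj, hcker⟩ := exists_c F φL t hφt (2 ^ (r - 1)) (by
    rw [hcard]
    have h' : r - 1 + 1 = r := by omega
    conv_lhs => rw [← h', pow_succ])
  have hφc : ∀ a, φ (c a) = 0 := hcker
  -- distinctness of the base abscissas
  have hne01 : (0 : F) ≠ 1 := zero_ne_one
  have h0t : (0 : F) ≠ t := Ne.symm ht0
  have h0t1 : (0 : F) ≠ t + 1 := fun h => ht1 (by linear_combination -h - h2)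
  have h1t : (1 : F) ≠ t := Ne.symm ht1
  have h1t1 : (1 : F) ≠ t + 1 := fun h => ht0 (by linear_combination -h)
  have htt1 : t ≠ t + 1 := fun h => (one_ne_zero : (1:F) ≠ 0) (by linear_combination -h)
  -- the finsets
  set A : Finset F := {0, 1, t, t + 1} with hA
  have hAmem : ∀ x ∈ A, x = 0 ∨ x = 1 ∨ x = t ∨ x = t + 1 := by
    intro x hx
    simpa [hA, Finset.mem_insert, Finset.mem_singleton] using hx
  have hAcard : A.card = 4 := by
    rw [hA]
    rw [Finset.card_insert_of_notMem (by simp [hne01, h0t, h0t1]),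
      Finset.card_insert_of_notMem (by simp [h1t, h1t1]),
      Finset.card_insert_of_notMem (by simp [htt1]),
      Finset.card_singleton]
  have hfinj : ∀ e : F, Function.Injective (fun x : F => ((x, x * x + e) : F × F)) := by
    intro e x y hxy
    exact (Prod.mk.injEq _ _ _ _).mp hxy |>.1
  set T : Fin (2 ^ (r - 1)) → Finset (F × F) :=
    fun a => A.image (fun x => (x, x * x + c a)) with hT
  have hTcard : ∀ a, (T a).card = 4 := by
    intro a
    rw [hT, Finset.card_image_of_injective _ (hfinj (c a)), hAcard]
  have hTdisj : ∀ a b : Fin (2 ^ (r - 1)), a ≠ b → Disjoint (T a) (T b) := by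
    intro a b hab
    rw [Finset.disjoint_left]
    intro p hpa hpb
    rw [hT, Finset.mem_image] at hpa hpb
    obtain ⟨x, hx, hxp⟩ := hpa
    obtain ⟨y, hy, hyp⟩ := hpb
    rw [← hyp] at hxp
    have hxy : x = y := ((Prod.mk.injEq _ _ _ _).mp hxp).1
    have : c a = c b := by
      have := ((Prod.mk.injEq _ _ _ _).mp hxp).2
      rw [hxy] at this
      exact add_left_cancel this
    exact hab (hcinj this)
  refine ⟨fun a => (T a : Set (F × F)), ?_, ?_, ?_, ?_⟩
  · intro a b hab
    exact Finset.disjoint_coe.mpr (hTdisj a b hab)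
  · intro a
    rw [Set.ncard_coe_finset, hTcard]
  · have hU : ⋃ a, (T a : Set (F × F)) = (Finset.univ.biUnion T : Finset (F × F)) := by
      ext p
      simp [Set.mem_iUnion]
    rw [hU, Set.ncard_coe_finset,
      Finset.card_biUnion (fun a _ b _ hab => hTdisj a b hab)]
    have : ∀ a ∈ Finset.univ, (T a).card = 4 := fun a _ => hTcard a
    rw [Finset.sum_congr rfl this, Finset.sum_const, Finset.card_univ, Fintype.card_fin,
      smul_eq_mul]
    have hr1 : r - 1 + 1 = r := by omega
    calc 2 ^ (r - 1) * 4 = 2 ^ (r - 1) * 2 * 2 := by ring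
    _ = 2 ^ (r - 1 + 1) * 2 := by rw [pow_succ]
    _ = 2 * 2 ^ r := by rw [hr1]; ring
  · intro a b p₁ hp₁ p₂ hp₂ p₃ hp₃ h12 h13 h23 hcol
    have unpack : ∀ p : F × F, p ∈ (T a : Set (F × F)) ∪ (T b : Set (F × F)) →
        ∃ x e, (x = 0 ∨ x = 1 ∨ x = t ∨ x = t + 1) ∧ (e = c a ∨ e = c b) ∧
          p = (x, x * x + e) := by
      intro p hp
      rcases hp with hp | hp <;> rw [Finset.mem_coe, hT, Finset.mem_image] at hp <;>
        obtain ⟨x, hx, hxp⟩ := hp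
      · exact ⟨x, c a, hAmem x hx, Or.inl rfl, hxp.symm⟩
      · exact ⟨x, c b, hAmem x hx, Or.inr rfl, hxp.symm⟩
    obtain ⟨x₁, e₁, hx₁, he₁, rfl⟩ := unpack p₁ hp₁
    obtain ⟨x₂, e₂, hx₂, he₂, rfl⟩ := unpack p₂ hp₂
    obtain ⟨x₃, e₃, hx₃, he₃, rfl⟩ := unpack p₃ hp₃
    have hφe₁ : φ e₁ = 0 := by rcases he₁ with rfl | rfl <;> exact hφc _
    have hφe₂ : φ e₂ = 0 := by rcases he₂ with rfl | rfl <;> exact hφc _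
    have hφe₃ : φ e₃ = 0 := by rcases he₃ with rfl | rfl <;> exact hφc _
    have hee : e₁ = e₂ ∨ e₁ = e₃ ∨ e₂ = e₃ := by
      rcases he₁ with rfl | rfl <;> rcases he₂ with rfl | rfl <;>
        rcases he₃ with rfl | rfl <;>
          first
            | (left; rfl)
            | (right; left; rfl)
            | (right; right; rfl)
    have hdet := collinear_det _ _ _ hcol
    simp only at hdet
    exact lem_key h2 t φ hφ1' hφt' hφtt' hφe₁ hφe₂ hφe₃ hee hx₁ hx₂ hx₃ h12 h13 h23 hdet
end

section
/- Let q be a prime power with q ≡ 3 (mod 4) and q ≥ 7. Then there exist (q−1)/2 pairwise disjoint subsets S_1, …, S_{(q−1)/2} of 𝔽_q × 𝔽_q, each of cardinality 4, such that for all indices a and b (including a = b), no three pairwise distinct points of S_a ∪ S_b are collinear. In particular the union of the S_a is a 4-local arc of size 2q − 2. -/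
/-!
Take the `(q - 1) / 2` nonzero squares `t = s²` of `𝔽_q` and let `S_t = {±s} × {±t}`: four points
on the two parabolas `y = x²` and `y = -x²`. Three distinct points on one parabola are never
collinear. If `(x₁, d x₁²)`, `(x₂, d x₂²)` and `(x₃, -d x₃²)` are collinear, then
`x₃² + (x₁ + x₂) x₃ - x₁ x₂ = 0`; when all `xᵢ` are among `±s, ±s'` this expression is one of
`x₃² + x₁²`, `2 xᵢ²` and `-2 x₁ x₂`, which are nonzero because `-1` is not a square for
`q ≡ 3 (mod 4)`.
-/

theorem eq_neg_or_sq_eq_or_sq_eq {R : Type*} [CommRing R] [NoZeroDivisors R] {x y z t t' : R}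
    (hx : x ^ 2 = t ∨ x ^ 2 = t') (hy : y ^ 2 = t ∨ y ^ 2 = t') (hz : z ^ 2 = t ∨ z ^ 2 = t')
    (hxy : x ≠ y) : y = -x ∨ z ^ 2 = x ^ 2 ∨ z ^ 2 = y ^ 2 := by
  by_cases hsq : y ^ 2 = x ^ 2
  · exact .inl ((sq_eq_sq_iff_eq_or_eq_neg.mp hsq).resolve_left (Ne.symm hxy))
  · right
    rcases hx with hx | hx <;> rcases hy with hy | hy <;> rcases hz with hz | hz <;>
      first | exact absurd (hy.trans hx.symm) hsq | simp_all

section Field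

variable {F : Type*} [Field F]

theorem sq_add_sq_ne_zero_of_not_isSquare_neg_one (hF : ¬IsSquare (-1 : F)) (x : F) {y : F}
    (hy : y ≠ 0) : x ^ 2 + y ^ 2 ≠ 0 := by
  intro h
  exact hF ⟨x / y, by field_simp; linear_combination -h⟩

theorem two_ne_zero_of_not_isSquare_neg_one (hF : ¬IsSquare (-1 : F)) : (2 : F) ≠ 0 := by
  simpa [one_add_one_eq_two] using sq_add_sq_ne_zero_of_not_isSquare_neg_one hF 1 one_ne_zero

theorem sq_add_mul_sub_mul_ne_zero (hF : ¬IsSquare (-1 : F)) {x y z : F} (hx : x ≠ 0)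
    (hy : y ≠ 0) (h : y = -x ∨ z ^ 2 = x ^ 2 ∨ z ^ 2 = y ^ 2) :
    z ^ 2 + (x + y) * z - x * y ≠ 0 := by
  have h2 := two_ne_zero_of_not_isSquare_neg_one hF
  have hxy : 2 * x * y ≠ 0 := by simp [h2, hx, hy]
  rcases h with rfl | h | h
  · simpa [← sq] using sq_add_sq_ne_zero_of_not_isSquare_neg_one hF z hx
  · rcases sq_eq_sq_iff_eq_or_eq_neg.mp h with rfl | rfl
    · intro H
      exact sq_add_sq_ne_zero_of_not_isSquare_neg_one hF z hx (by linear_combination H)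
    · exact fun H => hxy (by linear_combination -H)
  · rcases sq_eq_sq_iff_eq_or_eq_neg.mp h with rfl | rfl
    · intro H
      exact sq_add_sq_ne_zero_of_not_isSquare_neg_one hF z hy (by linear_combination H)
    · exact fun H => hxy (by linear_combination -H)

theorem cross_eq_of_collinear {p₁ p₂ p₃ : F × F} (h : Collinear F {p₁, p₂, p₃}) :
    (p₂.1 - p₁.1) * (p₃.2 - p₁.2) = (p₃.1 - p₁.1) * (p₂.2 - p₁.2) := by
  obtain ⟨v, hv⟩ := (collinear_iff_of_mem (Set.mem_insert p₁ _)).mp h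
  obtain ⟨r₂, rfl⟩ := hv p₂ (by simp)
  obtain ⟨r₃, rfl⟩ := hv p₃ (by simp)
  simp only [vadd_eq_add, Prod.fst_add, Prod.snd_add, Prod.smul_fst, Prod.smul_snd,
    smul_eq_mul, add_sub_cancel_right]
  ring

theorem not_collinear_of_parabola {d x₁ x₂ x₃ : F} (hd : d ≠ 0) (h₁₂ : x₁ ≠ x₂) (h₁₃ : x₁ ≠ x₃)
    (h₂₃ : x₂ ≠ x₃) : ¬Collinear F {(x₁, d * x₁ ^ 2), (x₂, d * x₂ ^ 2), (x₃, d * x₃ ^ 2)} := by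
  intro h
  have hC : d * (x₂ - x₁) * (x₃ - x₁) * (x₃ - x₂) = 0 := by
    linear_combination cross_eq_of_collinear h
  simp only [mul_eq_zero, sub_eq_zero] at hC
  grind

theorem not_collinear_of_parabola_of_neg {d x₁ x₂ x₃ : F} (hF : ¬IsSquare (-1 : F))
    (hd : d ≠ 0) (hx₁ : x₁ ≠ 0) (hx₂ : x₂ ≠ 0) (h₁₂ : x₁ ≠ x₂)
    (h : x₂ = -x₁ ∨ x₃ ^ 2 = x₁ ^ 2 ∨ x₃ ^ 2 = x₂ ^ 2) :
    ¬Collinear F {(x₁, d * x₁ ^ 2), (x₂, d * x₂ ^ 2), (x₃, -d * x₃ ^ 2)} := by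
  intro hcol
  have hC : d * (x₁ - x₂) * (x₃ ^ 2 + (x₁ + x₂) * x₃ - x₁ * x₂) = 0 := by
    linear_combination cross_eq_of_collinear hcol
  exact mul_ne_zero (mul_ne_zero hd (sub_ne_zero.mpr h₁₂))
    (sq_add_mul_sub_mul_ne_zero hF hx₁ hx₂ h) hC

theorem not_collinear_of_sq_eq_or_sq_eq (hF : ¬IsSquare (-1 : F)) {t t' : F} (ht : t ≠ 0)
    (ht' : t' ≠ 0) {x₁ x₂ x₃ d₁ d₂ d₃ : F} (hx₁ : x₁ ^ 2 = t ∨ x₁ ^ 2 = t')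
    (hx₂ : x₂ ^ 2 = t ∨ x₂ ^ 2 = t') (hx₃ : x₃ ^ 2 = t ∨ x₃ ^ 2 = t') (hd₁ : d₁ ^ 2 = 1)
    (hd₂ : d₂ ^ 2 = 1) (hd₃ : d₃ ^ 2 = 1) (h₁₂ : (x₁, d₁ * x₁ ^ 2) ≠ (x₂, d₂ * x₂ ^ 2))
    (h₁₃ : (x₁, d₁ * x₁ ^ 2) ≠ (x₃, d₃ * x₃ ^ 2)) (h₂₃ : (x₂, d₂ * x₂ ^ 2) ≠ (x₃, d₃ * x₃ ^ 2)) :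
    ¬Collinear F {(x₁, d₁ * x₁ ^ 2), (x₂, d₂ * x₂ ^ 2), (x₃, d₃ * x₃ ^ 2)} := by
  have hx_ne {x : F} (hx : x ^ 2 = t ∨ x ^ 2 = t') : x ≠ 0 := by
    rintro rfl
    rcases hx with hx | hx <;> simp_all [eq_comm]
  have hd₁₀ : d₁ ≠ 0 := by rintro rfl; simp at hd₁
  have h_sign {d d' : F} (hd : d ^ 2 = 1) (hd' : d' ^ 2 = 1) : d' = d ∨ d' = -d :=
    sq_eq_sq_iff_eq_or_eq_neg.mp (hd'.trans hd.symm)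
  rcases h_sign hd₁ hd₂ with rfl | rfl <;> rcases h_sign hd₁ hd₃ with rfl | rfl
  · exact not_collinear_of_parabola hd₁₀ (fun h => h₁₂ (by rw [h]))
      (fun h => h₁₃ (by rw [h])) (fun h => h₂₃ (by rw [h]))
  · have e₁₂ : x₁ ≠ x₂ := fun h => h₁₂ (by rw [h])
    exact not_collinear_of_parabola_of_neg hF hd₁₀ (hx_ne hx₁) (hx_ne hx₂) e₁₂
      (eq_neg_or_sq_eq_or_sq_eq hx₁ hx₂ hx₃ e₁₂)
  · have e₁₃ : x₁ ≠ x₃ := fun h => h₁₃ (by rw [h])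
    rw [Set.pair_comm]
    exact not_collinear_of_parabola_of_neg hF hd₁₀ (hx_ne hx₁) (hx_ne hx₃) e₁₃
      (eq_neg_or_sq_eq_or_sq_eq hx₁ hx₃ hx₂ e₁₃)
  · have e₂₃ : x₂ ≠ x₃ := fun h => h₂₃ (by rw [h])
    have h := not_collinear_of_parabola_of_neg hF (neg_ne_zero.mpr hd₁₀) (hx_ne hx₂) (hx_ne hx₃)
      e₂₃ (eq_neg_or_sq_eq_or_sq_eq hx₂ hx₃ hx₁ e₂₃)
    rwa [neg_neg, Set.pair_comm, Set.insert_comm] at h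

def fourPoints (t : F) : Set (F × F) := {x | x ^ 2 = t} ×ˢ {t, -t}

theorem ncard_fourPoints (h2 : (2 : F) ≠ 0) {t : F} (ht : IsSquare t) (ht0 : t ≠ 0) :
    (fourPoints t).ncard = 4 := by
  obtain ⟨s, rfl⟩ := ht
  have hs : s ≠ 0 := by rintro rfl; simp at ht0
  have hne {a : F} (ha : a ≠ 0) : a ≠ -a :=
    fun h => ha (mul_left_cancel₀ h2 (by linear_combination h))
  have hroots : {x : F | x ^ 2 = s * s} = {s, -s} := by
    ext x
    simp [← sq, sq_eq_sq_iff_eq_or_eq_neg]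
  rw [fourPoints, Set.ncard_prod, hroots, Set.ncard_pair (hne hs), Set.ncard_pair (hne ht0)]

theorem disjoint_fourPoints {t t' : F} (h : t ≠ t') : Disjoint (fourPoints t) (fourPoints t') :=
  Set.disjoint_left.mpr fun _ hp hp' => h (hp.1.symm.trans hp'.1)

theorem exists_sign_of_mem_fourPoints_union {t t' : F} {p : F × F}
    (hp : p ∈ fourPoints t ∪ fourPoints t') :
    ∃ x d : F, (x ^ 2 = t ∨ x ^ 2 = t') ∧ d ^ 2 = 1 ∧ p = (x, d * x ^ 2) := by
  rcases hp with ⟨hx, hy | hy⟩ | ⟨hx, hy | hy⟩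
  · exact ⟨p.1, 1, .inl hx, by norm_num, Prod.ext rfl (by simp_all)⟩
  · exact ⟨p.1, -1, .inl hx, by norm_num, Prod.ext rfl (by simp_all)⟩
  · exact ⟨p.1, 1, .inr hx, by norm_num, Prod.ext rfl (by simp_all)⟩
  · exact ⟨p.1, -1, .inr hx, by norm_num, Prod.ext rfl (by simp_all)⟩

end Field

theorem FiniteField.exists_injective_isSquare_ne_zero (F : Type*) [Field F] [Fintype F] :
    ∃ t : Fin ((Fintype.card F - 1) / 2) → F,
      Function.Injective t ∧ ∀ a, IsSquare (t a) ∧ t a ≠ 0 := by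
  classical
  let G := (powMonoidHom 2 : Fˣ →* Fˣ).range
  have hG : (Fintype.card F - 1) / 2 ≤ Nat.card G := by
    rw [IsCyclic.card_powMonoidHom_range, Nat.card_eq_fintype_card, Fintype.card_units]
    exact Nat.div_le_div_left (Nat.gcd_le_right _ two_pos) (Nat.gcd_pos_of_pos_right _ two_pos)
  let e := (Fin.castLEEmb hG).trans (Finite.equivFin G).symm.toEmbedding
  refine ⟨fun a => ((e a : Fˣ) : F), fun a b h => e.injective (Subtype.ext (Units.ext h)),
    fun a => ?_⟩
  obtain ⟨s, hs⟩ := (e a).2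
  exact ⟨⟨s, by simp [← hs, sq]⟩, Units.ne_zero _⟩

theorem stmt_4_general (q : ℕ) (hq4 : q % 4 = 3) (F : Type) [Field F] [Fintype F]
    (hcard : Fintype.card F = q) :
    ∃ S : Fin ((q - 1) / 2) → Set (F × F),
      (∀ a b, a ≠ b → Disjoint (S a) (S b)) ∧
      (∀ a, (S a).ncard = 4) ∧
      (⋃ a, S a).ncard = 2 * q - 2 ∧
      ∀ a b, ∀ p₁ ∈ S a ∪ S b, ∀ p₂ ∈ S a ∪ S b, ∀ p₃ ∈ S a ∪ S b,
        p₁ ≠ p₂ → p₁ ≠ p₃ → p₂ ≠ p₃ → ¬ Collinear F ({p₁, p₂, p₃} : Set (F × F)) := by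
  subst hcard
  have hF : ¬IsSquare (-1 : F) := FiniteField.isSquare_neg_one_iff.not.mpr (not_not.mpr hq4)
  have h2 := two_ne_zero_of_not_isSquare_neg_one hF
  obtain ⟨t, ht_inj, ht⟩ := FiniteField.exists_injective_isSquare_ne_zero F
  have hS (a) : (fourPoints (t a)).ncard = 4 := ncard_fourPoints h2 (ht a).1 (ht a).2
  refine ⟨fun a => fourPoints (t a), fun a b hab => disjoint_fourPoints (ht_inj.ne hab), hS,
    ?_, ?_⟩
  · rw [Set.ncard_iUnion_of_finite (fun _ => Set.toFinite _)
      (fun a b hab => disjoint_fourPoints (ht_inj.ne hab))]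
    simp only [hS, finsum_eq_sum_of_fintype, Finset.sum_const, Finset.card_univ,
      Fintype.card_fin, smul_eq_mul]
    omega
  · intro a b p₁ hp₁ p₂ hp₂ p₃ hp₃ h₁₂ h₁₃ h₂₃
    obtain ⟨x₁, d₁, hx₁, hd₁, rfl⟩ := exists_sign_of_mem_fourPoints_union hp₁
    obtain ⟨x₂, d₂, hx₂, hd₂, rfl⟩ := exists_sign_of_mem_fourPoints_union hp₂
    obtain ⟨x₃, d₃, hx₃, hd₃, rfl⟩ := exists_sign_of_mem_fourPoints_union hp₃
    exact not_collinear_of_sq_eq_or_sq_eq hF (ht a).2 (ht b).2 hx₁ hx₂ hx₃ hd₁ hd₂ hd₃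
      h₁₂ h₁₃ h₂₃

/-- For a prime power `q ≡ 3 (mod 4)` with `q ≥ 7`, there exist `(q-1)/2` pairwise
disjoint `4`-element subsets of the affine plane `𝔽_q × 𝔽_q` such that for all indices
`a` and `b` (including `a = b`), no three pairwise distinct points of `S a ∪ S b` are
collinear.  In particular the union of the sets is a `4`-local arc of size `2q - 2`. -/
theorem stmt_4 (q : ℕ) (hq : 7 ≤ q) (hq4 : q % 4 = 3) (F : Type) [Field F] [Fintype F]
    (hcard : Fintype.card F = q) :
    ∃ S : Fin ((q - 1) / 2) → Set (F × F),
      (∀ a b, a ≠ b → Disjoint (S a) (S b)) ∧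
      (∀ a, (S a).ncard = 4) ∧
      (⋃ a, S a).ncard = 2 * q - 2 ∧
      ∀ a b, ∀ p₁ ∈ S a ∪ S b, ∀ p₂ ∈ S a ∪ S b, ∀ p₃ ∈ S a ∪ S b,
        p₁ ≠ p₂ → p₁ ≠ p₃ → p₂ ≠ p₃ → ¬ Collinear F ({p₁, p₂, p₃} : Set (F × F)) :=
  stmt_4_general q hq4 F hcard
end

section
/- Let q = 2^r with r ≥ 2, let ω be a generator of the multiplicative group 𝔽_q^×, let δ = ω^{r−1}, and let V be the 𝔽₂-linear span of {ω^t : 0 ≤ t ≤ r−2} inside 𝔽_q (so V has 2^{r−1} elements and δ ∉ V). Let Γ ⊆ V × V be a set of cardinality 2^{r−1} such that the three maps (i,j) ↦ i, (i,j) ↦ j, and (i,j) ↦ i + j are injective on Γ. For u = (i,j) ∈ Γ set Σ_u = {(i,j), (i+δ,j), (i,j+δ), (i+δ,j+δ)} ⊆ 𝔽_q × 𝔽_q. Then the sets Σ_u, u ∈ Γ, are pairwise disjoint 4-element sets whose union has cardinality 2q, and for all u, v ∈ Γ (including u = v), no three pairwise distinct points of Σ_u ∪ Σ_v are collinear. 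-/
lemma coll_det {F : Type} [Field F] {p₁ p₂ p₃ : F × F}
    (h : Collinear F ({p₁, p₂, p₃} : Set (F × F))) :
    (p₂.1 - p₁.1) * (p₃.2 - p₁.2) = (p₃.1 - p₁.1) * (p₂.2 - p₁.2) := by
  obtain ⟨v, hv⟩ := (collinear_iff_of_mem (Set.mem_insert p₁ _)).1 h
  obtain ⟨t₂, ht₂⟩ := hv p₂ (by simp)
  obtain ⟨t₃, ht₃⟩ := hv p₃ (by simp)
  have h2a : p₂.1 = t₂ * v.1 + p₁.1 := by rw [ht₂]; rfl
  have h2b : p₂.2 = t₂ * v.2 + p₁.2 := by rw [ht₂]; rfl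
  have h3a : p₃.1 = t₃ * v.1 + p₁.1 := by rw [ht₃]; rfl
  have h3b : p₃.2 = t₃ * v.2 + p₁.2 := by rw [ht₃]; rfl
  rw [h2a, h2b, h3a, h3b]; ring

lemma keyA {F : Type} [Field F] {δ : F} (i j : F)
    (htwo : ∀ x : F, x + x = 0) (hδ0 : δ ≠ 0)
    (a₁ b₁ a₂ b₂ a₃ b₃ : F)
    (ha₁ : a₁ = 0 ∨ a₁ = δ) (hb₁ : b₁ = 0 ∨ b₁ = δ)
    (ha₂ : a₂ = 0 ∨ a₂ = δ) (hb₂ : b₂ = 0 ∨ b₂ = δ)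
    (ha₃ : a₃ = 0 ∨ a₃ = δ) (hb₃ : b₃ = 0 ∨ b₃ = δ)
    (h12 : a₁ ≠ a₂ ∨ b₁ ≠ b₂) (h13 : a₁ ≠ a₃ ∨ b₁ ≠ b₃) (h23 : a₂ ≠ a₃ ∨ b₂ ≠ b₃)
    (hcol : Collinear F ({(i+a₁, j+b₁), (i+a₂, j+b₂), (i+a₃, j+b₃)} : Set (F × F))) :
    False := by
  have hneg : ∀ x : F, -x = x := fun x => neg_eq_of_add_eq_zero_left (htwo x)
  have hd := coll_det hcol
  simp only at hd
  have hd' : (a₂ - a₁) * (b₃ - b₁) = (a₃ - a₁) * (b₂ - b₁) := by linear_combination hd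
  rcases ha₁ with rfl | rfl <;> rcases hb₁ with rfl | rfl <;>
    rcases ha₂ with rfl | rfl <;> rcases hb₂ with rfl | rfl <;>
    rcases ha₃ with rfl | rfl <;> rcases hb₃ with rfl | rfl <;>
    simp_all [sub_eq_add_neg, hneg, htwo, mul_self_eq_zero]

lemma keyC {F : Type} [Field F] {δ : F} {V : Set F} (i j k l : F)
    (htwo : ∀ x : F, x + x = 0) (hδ0 : δ ≠ 0) (hδV : δ ∉ V)
    (hVadd : ∀ x ∈ V, ∀ y ∈ V, x + y ∈ V)
    (hi : i ∈ V) (hj : j ∈ V) (hk : k ∈ V) (hl : l ∈ V)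
    (hik : i ≠ k) (hjl : j ≠ l) (hs : i + j ≠ k + l)
    (a₁ b₁ a₂ b₂ a₃ b₃ : F)
    (ha₁ : a₁ = 0 ∨ a₁ = δ) (hb₁ : b₁ = 0 ∨ b₁ = δ)
    (ha₂ : a₂ = 0 ∨ a₂ = δ) (hb₂ : b₂ = 0 ∨ b₂ = δ)
    (ha₃ : a₃ = 0 ∨ a₃ = δ) (hb₃ : b₃ = 0 ∨ b₃ = δ)
    (h12 : a₁ ≠ a₂ ∨ b₁ ≠ b₂)
    (hcol : Collinear F ({(i+a₁, j+b₁), (i+a₂, j+b₂), (k+a₃, l+b₃)} : Set (F × F))) :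
    False := by
  have hneg : ∀ x : F, -x = x := fun x => neg_eq_of_add_eq_zero_left (htwo x)
  have hd := coll_det hcol
  simp only at hd
  have hrange : ∀ x y : F, (x = 0 ∨ x = δ) → (y = 0 ∨ y = δ) →
      (y - x = 0 ∨ y - x = δ) := by
    rintro x y (rfl | rfl) (rfl | rfl) <;> simp [hneg, htwo]
  have hA := hrange _ _ ha₁ ha₂
  have hE := hrange _ _ hb₁ hb₂
  have hB := hrange _ _ hb₁ hb₃
  have hC := hrange _ _ ha₁ ha₃
  have hw : k - i ∈ V := by rw [sub_eq_add_neg, hneg]; exact hVadd k hk i hi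
  have hz : l - j ∈ V := by rw [sub_eq_add_neg, hneg]; exact hVadd l hl j hj
  have hw0 : k - i ≠ 0 := sub_ne_zero.2 (Ne.symm hik)
  have hz0 : l - j ≠ 0 := sub_ne_zero.2 (Ne.symm hjl)
  have hwz : (l - j) - (k - i) ≠ 0 := by
    intro h; apply hs
    have : k + l = i + j := by linear_combination h + htwo k - htwo i
    exact this.symm
  have hd' : (a₂ - a₁) * ((l - j) + (b₃ - b₁)) = ((k - i) + (a₃ - a₁)) * (b₂ - b₁) := by
    linear_combination hd
  have h12' : ¬(a₂ - a₁ = 0 ∧ b₂ - b₁ = 0) := by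
    rintro ⟨hx, hy⟩
    rcases h12 with h | h
    · exact h (by linear_combination -hx)
    · exact h (by linear_combination -hy)
  rcases hA with hA | hA <;> rcases hE with hE | hE
  · exact h12' ⟨hA, hE⟩
  · -- A = 0, E = δ : (k-i) + C = 0
    rw [hA, hE, zero_mul] at hd'
    have h0 : (k - i) + (a₃ - a₁) = 0 := by
      rcases mul_eq_zero.1 hd'.symm with h | h
      · exact h
      · exact absurd h hδ0
    rcases hC with hC | hC
    · rw [hC, add_zero] at h0; exact hw0 h0
    · apply hδV
      have hδw : δ = k - i := by rw [hC] at h0; linear_combination -h0 + htwo δ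
      rw [hδw]; exact hw
  · -- A = δ, E = 0 : (l-j) + B = 0
    rw [hA, hE, mul_zero] at hd'
    have h0 : (l - j) + (b₃ - b₁) = 0 := by
      rcases mul_eq_zero.1 hd' with h | h
      · exact absurd h hδ0
      · exact h
    rcases hB with hB | hB
    · rw [hB, add_zero] at h0; exact hz0 h0
    · apply hδV
      have hδz : δ = l - j := by rw [hB] at h0; linear_combination -h0 + htwo δ
      rw [hδz]; exact hz
  · -- A = δ, E = δ
    rw [hA, hE] at hd'
    have h0 : (l - j) - (k - i) = (a₃ - a₁) - (b₃ - b₁) := by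
      have hc := mul_left_cancel₀ hδ0
        (show δ * ((l - j) + (b₃ - b₁)) = δ * ((k - i) + (a₃ - a₁)) by linear_combination hd')
      linear_combination hc
    have hmem : (l - j) - (k - i) ∈ V := by
      have he : (l - j) - (k - i) = (l - j) + (k - i) := by linear_combination -htwo (k - i)
      rw [he]; exact hVadd _ hz _ hw
    rcases hB with hB | hB <;> rcases hC with hC | hC <;> rw [hB, hC] at h0
    · rw [sub_zero] at h0; exact hwz h0
    · apply hδV; rw [show δ = (l-j)-(k-i) by rw [h0]; ring]; exact hmem
    · apply hδV
      rw [show δ = (l-j)-(k-i) by rw [h0]; rw [zero_sub, hneg]]; exact hmem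
    · rw [sub_self] at h0; exact hwz h0

/-- Let `q = 2^r` with `r ≥ 2`, let `ω` be a generator of `𝔽_q^×`, `δ = ω^(r-1)`, and
let `V` be the `𝔽₂`-span of `{ω^t : 0 ≤ t ≤ r-2}`.  If `Γ ⊆ V × V` has `2^(r-1)`
elements and the maps `(i,j) ↦ i`, `(i,j) ↦ j` and `(i,j) ↦ i + j` are injective on `Γ`
(i.e. `Γ` is a transversal of the Cayley table of `(V,+)`), then the translated squares
`Σ_u = {(i,j), (i+δ,j), (i,j+δ), (i+δ,j+δ)}`, `u = (i,j) ∈ Γ`, are pairwise disjoint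
`4`-element sets whose union has `2q` points, and no three pairwise distinct points of
the union of any two of them are collinear. -/
theorem stmt_6 (r : ℕ) (hr : 2 ≤ r) (F : Type) [Field F] [Fintype F]
    (hcard : Fintype.card F = 2 ^ r) (ω : Fˣ) (hω : Subgroup.zpowers ω = ⊤)
    (V : Set F)
    (hV : V = {x | ∃ c : Fin (r - 1) → Bool,
      x = ∑ t : Fin (r - 1), if c t then (ω : F) ^ (t : ℕ) else 0})
    (Γ : Set (F × F)) (hΓV : Γ ⊆ V ×ˢ V) (hΓcard : Γ.ncard = 2 ^ (r - 1))
    (h1 : Set.InjOn (fun p : F × F => p.1) Γ)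
    (h2 : Set.InjOn (fun p : F × F => p.2) Γ)
    (h3 : Set.InjOn (fun p : F × F => p.1 + p.2) Γ) :
    let δ : F := (ω : F) ^ (r - 1)
    let Sig : F × F → Set (F × F) := fun u =>
      {(u.1, u.2), (u.1 + δ, u.2), (u.1, u.2 + δ), (u.1 + δ, u.2 + δ)}
    (∀ u ∈ Γ, (Sig u).ncard = 4) ∧
    (∀ u ∈ Γ, ∀ v ∈ Γ, u ≠ v → Disjoint (Sig u) (Sig v)) ∧
    (⋃ u ∈ Γ, Sig u).ncard = 2 * 2 ^ r ∧
    (∀ u ∈ Γ, ∀ v ∈ Γ, ∀ p₁ ∈ Sig u ∪ Sig v, ∀ p₂ ∈ Sig u ∪ Sig v, ∀ p₃ ∈ Sig u ∪ Sig v,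
      p₁ ≠ p₂ → p₁ ≠ p₃ → p₂ ≠ p₃ → ¬ Collinear F ({p₁, p₂, p₃} : Set (F × F))) := by
  classical
  intro δ Sig
  have hSigdef : ∀ x : F × F,
      Sig x = {(x.1, x.2), (x.1 + δ, x.2), (x.1, x.2 + δ), (x.1 + δ, x.2 + δ)} :=
    fun _ => rfl
  -- characteristic two
  have h2F : (2 : F) = 0 := by
    have hc := FiniteField.cast_card_eq_zero F
    rw [hcard] at hc
    push_cast at hc
    exact (pow_eq_zero_iff (by omega : r ≠ 0)).1 hc
  have htwo : ∀ x : F, x + x = 0 := fun x => by rw [← two_mul, h2F, zero_mul]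
  have hδ0 : δ ≠ 0 := pow_ne_zero _ (Units.ne_zero ω)
  have h0V : (0 : F) ∈ V := by rw [hV]; exact ⟨fun _ => false, by simp⟩
  have hVadd : ∀ x ∈ V, ∀ y ∈ V, x + y ∈ V := by
    intro x hx y hy
    rw [hV] at hx hy ⊢
    obtain ⟨c, rfl⟩ := hx
    obtain ⟨d, rfl⟩ := hy
    refine ⟨fun t => xor (c t) (d t), ?_⟩
    rw [← Finset.sum_add_distrib]
    refine Finset.sum_congr rfl fun t _ => ?_
    cases hc : c t <;> cases hd : d t <;> simp [hc, hd, htwo]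
  have hr1 : 0 < r - 1 := by omega
  -- δ ∉ V
  have hδV : δ ∉ V := by
    intro hδ
    have hsmall : ∀ n : ℕ, n < r - 1 → (ω : F) ^ n ∈ V := by
      intro n hn
      rw [hV]
      refine ⟨fun t => decide (t = ⟨n, hn⟩), ?_⟩
      rw [Finset.sum_eq_single (⟨n, hn⟩ : Fin (r - 1))]
      · simp
      · intro b _ hb; simp [hb]
      · simp
    have hmul : ∀ x ∈ V, (ω : F) * x ∈ V := by
      intro x hx
      rw [hV] at hx
      obtain ⟨c, rfl⟩ := hx
      rw [Finset.mul_sum]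
      refine Finset.sum_induction _ (· ∈ V) (fun a b ha hb => hVadd a ha b hb) h0V ?_
      intro t _
      cases hc : c t
      · simp [h0V]
      · simp only [if_true]
        have hps : (ω : F) * (ω : F) ^ (t : ℕ) = (ω : F) ^ ((t : ℕ) + 1) := by ring
        rw [hps]
        rcases Nat.lt_or_ge ((t : ℕ) + 1) (r - 1) with h | h
        · exact hsmall _ h
        · have ht : (t : ℕ) + 1 = r - 1 := by have := t.2; omega
          rw [ht]; exact hδ
    have hall : ∀ n : ℕ, (ω : F) ^ n ∈ V := by
      intro n
      induction n with
      | zero => exact hsmall 0 hr1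
      | succ n ih =>
          have hps : (ω : F) ^ (n + 1) = (ω : F) * (ω : F) ^ n := by ring
          rw [hps]; exact hmul _ ih
    have huniv : ∀ x : F, x ∈ V := by
      intro x
      rcases eq_or_ne x 0 with rfl | hx
      · exact h0V
      · obtain ⟨n, hn⟩ := mem_powers_iff_mem_zpowers.2
          (hω ▸ Subgroup.mem_top (Units.mk0 x hx))
        have hx' : (ω : F) ^ n = x := by
          have := congrArg (Units.val) hn
          rwa [Units.val_pow_eq_pow_val] at this
        rw [← hx']; exact hall n
    have hsurj : Function.Surjective
        (fun c : Fin (r - 1) → Bool => ∑ t : Fin (r - 1), if c t then (ω : F) ^ (t : ℕ) else 0) := by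
      intro x
      have hx := huniv x
      rw [hV] at hx
      obtain ⟨c, hc⟩ := hx
      exact ⟨c, hc.symm⟩
    have hle := Fintype.card_le_of_surjective _ hsurj
    rw [hcard] at hle
    simp only [Fintype.card_fun, Fintype.card_bool, Fintype.card_fin] at hle
    have : 2 ^ (r - 1) < 2 ^ r := Nat.pow_lt_pow_right (by norm_num) (by omega)
    omega
  -- membership normal form
  have hmem : ∀ x p : F × F, p ∈ Sig x → ∃ a b : F,
      (a = 0 ∨ a = δ) ∧ (b = 0 ∨ b = δ) ∧ p = (x.1 + a, x.2 + b) := by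
    intro x p hp
    rw [hSigdef, Set.mem_insert_iff, Set.mem_insert_iff, Set.mem_insert_iff,
      Set.mem_singleton_iff] at hp
    rcases hp with rfl | rfl | rfl | rfl
    · exact ⟨0, 0, Or.inl rfl, Or.inl rfl, by simp⟩
    · exact ⟨δ, 0, Or.inr rfl, Or.inl rfl, by simp⟩
    · exact ⟨0, δ, Or.inl rfl, Or.inr rfl, by simp⟩
    · exact ⟨δ, δ, Or.inr rfl, Or.inr rfl, by simp⟩
  have flagne : ∀ (x y : F × F) (a b c d : F),
      ((x.1 + a, x.2 + b) : F × F) ≠ (y.1 + c, y.2 + d) → x = y → a ≠ c ∨ b ≠ d := by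
    intro x y a b c d h hxy
    subst hxy
    by_contra hcon
    push_neg at hcon
    exact h (by rw [hcon.1, hcon.2])
  have hcoord : ∀ x y a c : F, x ∈ V → y ∈ V → (a = 0 ∨ a = δ) → (c = 0 ∨ c = δ) →
      x + a = y + c → x = y := by
    rintro x y a c hx hy (rfl | rfl) (rfl | rfl) h
    · simpa using h
    · exfalso
      apply hδV
      have hxy : δ = x + y := by linear_combination -h - htwo y
      have hm : x + y ∈ V := hVadd x hx y hy
      rwa [← hxy] at hm
    · exfalso
      apply hδV
      have hxy : δ = x + y := by linear_combination h - htwo x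
      have hm : x + y ∈ V := hVadd x hx y hy
      rwa [← hxy] at hm
    · exact add_right_cancel h
  -- part 1
  have hSig4 : ∀ x : F × F, (Sig x).ncard = 4 := by
    intro x
    rw [hSigdef]
    rw [Set.ncard_insert_of_notMem (by simp [Prod.ext_iff, hδ0]),
      Set.ncard_insert_of_notMem (by simp [Prod.ext_iff, hδ0]),
      Set.ncard_insert_of_notMem (by simp [Prod.ext_iff, hδ0]),
      Set.ncard_singleton]
  -- part 2
  have hdisj : ∀ u ∈ Γ, ∀ v ∈ Γ, u ≠ v → Disjoint (Sig u) (Sig v) := by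
    intro u hu v hv huv
    rw [Set.disjoint_left]
    intro p hpu hpv
    obtain ⟨a, b, ha, hb, rfl⟩ := hmem u p hpu
    obtain ⟨c, d, hc, hd, hpq⟩ := hmem v _ hpv
    have he : u.1 + a = v.1 + c := congrArg Prod.fst hpq
    exact huv (h1 hu hv (hcoord u.1 v.1 a c (Set.mem_prod.1 (hΓV hu)).1
      (Set.mem_prod.1 (hΓV hv)).1 ha hc he))
  refine ⟨fun u _ => hSig4 u, hdisj, ?_, ?_⟩
  -- part 3 : counting
  · have hΓfin : Γ.Finite := Set.toFinite Γ
    have hU : (⋃ u ∈ Γ, Sig u) =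
        ↑(hΓfin.toFinset.biUnion fun u => (Set.toFinite (Sig u)).toFinset) := by
      ext p; simp only [Set.mem_iUnion, Finset.coe_biUnion, Set.mem_iUnion,
        Finset.mem_coe, Set.Finite.mem_toFinset]
    rw [hU, Set.ncard_coe_finset, Finset.card_biUnion]
    · have hsum : ∑ u ∈ hΓfin.toFinset, ((Set.toFinite (Sig u)).toFinset).card
          = ∑ u ∈ hΓfin.toFinset, 4 := by
        refine Finset.sum_congr rfl fun u _ => ?_
        rw [← Set.ncard_eq_toFinset_card _ (Set.toFinite (Sig u))]
        exact hSig4 u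
      rw [hsum, Finset.sum_const, smul_eq_mul, ← Set.ncard_eq_toFinset_card _ hΓfin, hΓcard]
      obtain ⟨m, rfl⟩ : ∃ m, r = m + 1 := ⟨r - 1, by omega⟩
      simp only [Nat.add_sub_cancel]
      ring
    · intro x hx y hy hxy
      rw [Function.onFun, Set.Finite.disjoint_toFinset]
      exact hdisj x (hΓfin.mem_toFinset.1 hx) y (hΓfin.mem_toFinset.1 hy) hxy
  -- part 4 : collinearity
  · intro u hu v hv p₁ hp₁ p₂ hp₂ p₃ hp₃ hne12 hne13 hne23 hcol
    have same : ∀ x : F × F, ∀ q₁ ∈ Sig x, ∀ q₂ ∈ Sig x, ∀ q₃ ∈ Sig x,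
        q₁ ≠ q₂ → q₁ ≠ q₃ → q₂ ≠ q₃ →
        Collinear F ({q₁, q₂, q₃} : Set (F × F)) → False := by
      intro x q₁ hq₁ q₂ hq₂ q₃ hq₃ hn12 hn13 hn23 hc
      obtain ⟨a₁, b₁, ha₁, hb₁, rfl⟩ := hmem x q₁ hq₁
      obtain ⟨a₂, b₂, ha₂, hb₂, rfl⟩ := hmem x q₂ hq₂
      obtain ⟨a₃, b₃, ha₃, hb₃, rfl⟩ := hmem x q₃ hq₃
      exact keyA x.1 x.2 htwo hδ0 a₁ b₁ a₂ b₂ a₃ b₃ ha₁ hb₁ ha₂ hb₂ ha₃ hb₃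
        (flagne x x _ _ _ _ hn12 rfl) (flagne x x _ _ _ _ hn13 rfl)
        (flagne x x _ _ _ _ hn23 rfl) hc
    have mixed : ∀ x y : F × F, x ∈ Γ → y ∈ Γ → x ≠ y →
        ∀ q₁ ∈ Sig x, ∀ q₂ ∈ Sig x, ∀ q₃ ∈ Sig y, q₁ ≠ q₂ →
        Collinear F ({q₁, q₂, q₃} : Set (F × F)) → False := by
      intro x y hx hy hxy q₁ hq₁ q₂ hq₂ q₃ hq₃ hn12 hc
      obtain ⟨a₁, b₁, ha₁, hb₁, rfl⟩ := hmem x q₁ hq₁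
      obtain ⟨a₂, b₂, ha₂, hb₂, rfl⟩ := hmem x q₂ hq₂
      obtain ⟨a₃, b₃, ha₃, hb₃, rfl⟩ := hmem y q₃ hq₃
      exact keyC x.1 x.2 y.1 y.2 htwo hδ0 hδV hVadd
        (Set.mem_prod.1 (hΓV hx)).1 (Set.mem_prod.1 (hΓV hx)).2
        (Set.mem_prod.1 (hΓV hy)).1 (Set.mem_prod.1 (hΓV hy)).2
        (fun h => hxy (h1 hx hy h)) (fun h => hxy (h2 hx hy h))
        (fun h => hxy (h3 hx hy h))
        a₁ b₁ a₂ b₂ a₃ b₃ ha₁ hb₁ ha₂ hb₂ ha₃ hb₃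
        (flagne x x _ _ _ _ hn12 rfl) hc
    by_cases huv : u = v
    · subst huv
      rw [Set.union_self] at hp₁ hp₂ hp₃
      exact same u p₁ hp₁ p₂ hp₂ p₃ hp₃ hne12 hne13 hne23 hcol
    · rw [Set.mem_union] at hp₁ hp₂ hp₃
      rcases hp₁ with h1p | h1p <;> rcases hp₂ with h2p | h2p <;> rcases hp₃ with h3p | h3p
      · exact same u p₁ h1p p₂ h2p p₃ h3p hne12 hne13 hne23 hcol
      · exact mixed u v hu hv huv p₁ h1p p₂ h2p p₃ h3p hne12 hcol
      · exact mixed u v hu hv huv p₁ h1p p₃ h3p p₂ h2p hne13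
          (by rwa [show ({p₁, p₃, p₂} : Set (F × F)) = {p₁, p₂, p₃} by ext z; simp; tauto])
      · exact mixed v u hv hu (Ne.symm huv) p₂ h2p p₃ h3p p₁ h1p hne23
          (by rwa [show ({p₂, p₃, p₁} : Set (F × F)) = {p₁, p₂, p₃} by ext z; simp; tauto])
      · exact mixed u v hu hv huv p₂ h2p p₃ h3p p₁ h1p hne23
          (by rwa [show ({p₂, p₃, p₁} : Set (F × F)) = {p₁, p₂, p₃} by ext z; simp; tauto])
      · exact mixed v u hv hu (Ne.symm huv) p₁ h1p p₃ h3p p₂ h2p hne13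
          (by rwa [show ({p₁, p₃, p₂} : Set (F × F)) = {p₁, p₂, p₃} by ext z; simp; tauto])
      · exact mixed v u hv hu (Ne.symm huv) p₁ h1p p₂ h2p p₃ h3p hne12 hcol
      · exact same v p₁ h1p p₂ h2p p₃ h3p hne12 hne13 hne23 hcol
end

section
/- Let q be an odd prime power, let ω be a generator of the multiplicative group 𝔽_q^×, let r = (q−1)/2, and let S = {ω^t : 0 ≤ t ≤ r−1} ⊆ 𝔽_q^×. Let Γ ⊆ S × S be such that the maps (i,j) ↦ i and (i,j) ↦ j are injective on Γ, and such that for all distinct (i,j), (i′,j′) ∈ Γ one has j·i′ ≠ j′·i and j·i′ ≠ −j′·i. For u = (i,j) ∈ Γ set Σ_u = {(i,j), (−i,j), (i,−j), (−i,−j)} ⊆ 𝔽_q × 𝔽_q. Then the sets Σ_u, u ∈ Γ, are pairwise disjoint 4-element sets whose union has cardinality 4·|Γ|, and for all u, v ∈ Γ (including u = v), no three pairwise distinct points of Σ_u ∪ Σ_v are collinear. -/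
section stmt7helpers
variable {F : Type} [Field F]

private lemma stmt7_collinear_det {x₁ y₁ x₂ y₂ x₃ y₃ : F}
    (h : Collinear F ({(x₁,y₁),(x₂,y₂),(x₃,y₃)} : Set (F×F))) :
    (x₂ - x₁)*(y₃-y₁) = (y₂-y₁)*(x₃-x₁) := by
  obtain ⟨v, hv⟩ := (collinear_iff_of_mem (show ((x₁,y₁) : F×F) ∈ _ by simp)).1 h
  obtain ⟨r₂, hr₂⟩ := hv (x₂,y₂) (by simp)
  obtain ⟨r₃, hr₃⟩ := hv (x₃,y₃) (by simp)
  rw [Prod.ext_iff] at hr₂ hr₃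
  simp only [Prod.fst_add, Prod.snd_add, Prod.smul_fst, Prod.smul_snd, smul_eq_mul,
    vadd_eq_add] at hr₂ hr₃
  obtain ⟨h2x, h2y⟩ := hr₂
  obtain ⟨h3x, h3y⟩ := hr₃
  subst h2x h2y h3x h3y
  ring

private lemma stmt7_pair_ne {a b e d e' d' : F} (h : (e*a, d*b) ≠ (e'*a, d'*b)) :
    (e,d) ≠ (e',d') := fun h' => h (by
  rw [show e = e' from congrArg Prod.fst h', show d = d' from congrArg Prod.snd h'])

private lemma stmt7_mem_sig {a b : F} {p : F × F}
    (h : p ∈ ({(a,b),(-a,b),(a,-b),(-a,-b)} : Set (F×F))) :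
    ∃ e d : F, (e = 1 ∨ e = -1) ∧ (d = 1 ∨ d = -1) ∧ p = (e*a, d*b) := by
  simp only [Set.mem_insert_iff, Set.mem_singleton_iff] at h
  rcases h with rfl|rfl|rfl|rfl
  · exact ⟨1, 1, Or.inl rfl, Or.inl rfl, by norm_num⟩
  · exact ⟨-1, 1, Or.inr rfl, Or.inl rfl, by norm_num⟩
  · exact ⟨1, -1, Or.inl rfl, Or.inr rfl, by norm_num⟩
  · exact ⟨-1, -1, Or.inr rfl, Or.inr rfl, by norm_num⟩

set_option maxHeartbeats 2000000 in
private lemma stmt7_helperA (h2 : (2:F) ≠ 0) (i j : F) (hi : i ≠ 0) (hj : j ≠ 0)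
    (e₁ d₁ e₂ d₂ e₃ d₃ : F)
    (he₁ : e₁ = 1 ∨ e₁ = -1) (hd₁ : d₁ = 1 ∨ d₁ = -1)
    (he₂ : e₂ = 1 ∨ e₂ = -1) (hd₂ : d₂ = 1 ∨ d₂ = -1)
    (he₃ : e₃ = 1 ∨ e₃ = -1) (hd₃ : d₃ = 1 ∨ d₃ = -1)
    (h12 : (e₁,d₁) ≠ (e₂,d₂)) (h13 : (e₁,d₁) ≠ (e₃,d₃)) (h23 : (e₂,d₂) ≠ (e₃,d₃))
    (hdet : (e₂*i - e₁*i)*(d₃*j - d₁*j) = (d₂*j - d₁*j)*(e₃*i - e₁*i)) : False := by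
  have H : (2:F)*2*i*j ≠ 0 := mul_ne_zero (mul_ne_zero (mul_ne_zero h2 h2) hi) hj
  rcases he₁ with rfl|rfl <;> rcases hd₁ with rfl|rfl <;>
  rcases he₂ with rfl|rfl <;> rcases hd₂ with rfl|rfl <;>
  rcases he₃ with rfl|rfl <;> rcases hd₃ with rfl|rfl <;>
  first
    | exact h12 rfl | exact h13 rfl | exact h23 rfl
    | exact H (by linear_combination hdet)
    | exact H (by linear_combination -hdet)

set_option maxHeartbeats 2000000 in
private lemma stmt7_helperB (h2 : (2:F) ≠ 0) (i j i' j' : F) (hi : i ≠ 0) (hj : j ≠ 0)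
    (hii' : ∀ s : F, s = 1 ∨ s = -1 → i' ≠ s * i)
    (hjj' : ∀ s : F, s = 1 ∨ s = -1 → j' ≠ s * j)
    (hx : ∀ s : F, s = 1 ∨ s = -1 → j * i' ≠ s * (j' * i))
    (e₁ d₁ e₂ d₂ e₃ d₃ : F)
    (he₁ : e₁ = 1 ∨ e₁ = -1) (hd₁ : d₁ = 1 ∨ d₁ = -1)
    (he₂ : e₂ = 1 ∨ e₂ = -1) (hd₂ : d₂ = 1 ∨ d₂ = -1)
    (he₃ : e₃ = 1 ∨ e₃ = -1) (hd₃ : d₃ = 1 ∨ d₃ = -1)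
    (h12 : (e₁,d₁) ≠ (e₂,d₂))
    (hdet : (e₂*i - e₁*i)*(d₃*j' - d₁*j) = (d₂*j - d₁*j)*(e₃*i' - e₁*i)) : False := by
  have Ci : ∀ x y : F, (2*j)*x = (2*j)*y → x = y :=
    fun x y h => mul_left_cancel₀ (mul_ne_zero h2 hj) h
  have Cj : ∀ x y : F, (2*i)*x = (2*i)*y → x = y :=
    fun x y h => mul_left_cancel₀ (mul_ne_zero h2 hi) h
  have Cx : ∀ x y : F, (2:F)*x = 2*y → x = y :=
    fun x y h => mul_left_cancel₀ h2 h
  rcases he₁ with rfl|rfl <;> rcases hd₁ with rfl|rfl <;>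
  rcases he₂ with rfl|rfl <;> rcases hd₂ with rfl|rfl <;>
  rcases he₃ with rfl|rfl <;> rcases hd₃ with rfl|rfl <;>
  first
    | exact h12 rfl
    | exact hii' 1 (Or.inl rfl) (Ci _ _ (by linear_combination hdet))
    | exact hii' 1 (Or.inl rfl) (Ci _ _ (by linear_combination -hdet))
    | exact hii' (-1) (Or.inr rfl) (Ci _ _ (by linear_combination hdet))
    | exact hii' (-1) (Or.inr rfl) (Ci _ _ (by linear_combination -hdet))
    | exact hjj' 1 (Or.inl rfl) (Cj _ _ (by linear_combination hdet))
    | exact hjj' 1 (Or.inl rfl) (Cj _ _ (by linear_combination -hdet))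
    | exact hjj' (-1) (Or.inr rfl) (Cj _ _ (by linear_combination hdet))
    | exact hjj' (-1) (Or.inr rfl) (Cj _ _ (by linear_combination -hdet))
    | exact hx 1 (Or.inl rfl) (Cx _ _ (by linear_combination hdet))
    | exact hx 1 (Or.inl rfl) (Cx _ _ (by linear_combination -hdet))
    | exact hx (-1) (Or.inr rfl) (Cx _ _ (by linear_combination hdet))
    | exact hx (-1) (Or.inr rfl) (Cx _ _ (by linear_combination -hdet))

end stmt7helpers

/-- Let `q` be an odd prime power, `ω` a generator of `𝔽_q^×`, `r = (q-1)/2`, and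
`S = {ω^t : 0 ≤ t ≤ r-1}`.  If `Γ ⊆ S × S` is such that the coordinate projections are
injective on `Γ` and for all distinct `(i,j), (i',j') ∈ Γ` one has `j*i' ≠ j'*i` and
`j*i' ≠ -(j'*i)`, then the symmetric quadruples `Σ_u = {(±i, ±j)}`, `u = (i,j) ∈ Γ`, are
pairwise disjoint `4`-element sets whose union has `4·|Γ|` points, and no three pairwise
distinct points of the union of any two of them are collinear. -/
theorem stmt_7 (F : Type) [Field F] [Fintype F] (hodd : Odd (Fintype.card F))
    (ω : Fˣ) (hω : Subgroup.zpowers ω = ⊤)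
    (Γ : Set (F × F))
    (hΓS : Γ ⊆ {x : F | ∃ t < (Fintype.card F - 1) / 2, x = (ω : F) ^ t} ×ˢ
            {x : F | ∃ t < (Fintype.card F - 1) / 2, x = (ω : F) ^ t})
    (h1 : Set.InjOn (fun p : F × F => p.1) Γ)
    (h2 : Set.InjOn (fun p : F × F => p.2) Γ)
    (h3 : ∀ p ∈ Γ, ∀ p' ∈ Γ, p ≠ p' →
      p.2 * p'.1 ≠ p'.2 * p.1 ∧ p.2 * p'.1 ≠ -(p'.2 * p.1)) :
    let Sig : F × F → Set (F × F) := fun u =>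
      {(u.1, u.2), (-u.1, u.2), (u.1, -u.2), (-u.1, -u.2)}
    (∀ u ∈ Γ, (Sig u).ncard = 4) ∧
    (∀ u ∈ Γ, ∀ v ∈ Γ, u ≠ v → Disjoint (Sig u) (Sig v)) ∧
    (⋃ u ∈ Γ, Sig u).ncard = 4 * Γ.ncard ∧
    (∀ u ∈ Γ, ∀ v ∈ Γ, ∀ p₁ ∈ Sig u ∪ Sig v, ∀ p₂ ∈ Sig u ∪ Sig v, ∀ p₃ ∈ Sig u ∪ Sig v,
      p₁ ≠ p₂ → p₁ ≠ p₃ → p₂ ≠ p₃ → ¬ Collinear F ({p₁, p₂, p₃} : Set (F × F))) := by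
  intro Sig
  have hSig : Sig = fun u : F × F =>
      ({(u.1, u.2), (-u.1, u.2), (u.1, -u.2), (-u.1, -u.2)} : Set (F × F)) := rfl
  set q := Fintype.card F with hq
  set r := (q - 1) / 2 with hr
  -- characteristic is odd
  have two_ne : (2:F) ≠ 0 := by
    refine Ring.two_ne_zero ?_
    intro hchar
    have := FiniteField.even_card_of_char_two hchar
    obtain ⟨k, hk⟩ := hodd
    omega
  have hq2 : q - 1 = 2 * r := by
    obtain ⟨k, hk⟩ := hodd
    omega
  -- order of ω
  have hord : orderOf ω = q - 1 := by
    classical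
    rw [orderOf_eq_card_of_forall_mem_zpowers (fun x => by rw [hω]; trivial),
      Nat.card_eq_fintype_card, Fintype.card_units]
  -- elements of S are nonzero
  have Snz : ∀ x : F, (∃ t < r, x = (ω : F) ^ t) → x ≠ 0 := by
    rintro x ⟨t, _, rfl⟩
    exact pow_ne_zero _ (Units.ne_zero ω)
  -- no two elements of S sum to zero
  have Ssum : ∀ x y : F, (∃ t < r, x = (ω : F) ^ t) → (∃ t < r, y = (ω : F) ^ t) →
      x ≠ -y := by
    rintro x y ⟨t, ht, rfl⟩ ⟨s, hs, rfl⟩ heq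
    have hsqF : ((ω : F) ^ t) ^ 2 = ((ω : F) ^ s) ^ 2 := by rw [heq]; ring
    have hsqU : (ω ^ t) ^ 2 = (ω ^ s) ^ 2 := by
      apply Units.ext
      push_cast
      exact hsqF
    have hpow : ω ^ (t * 2) = ω ^ (s * 2) := by rwa [pow_mul, pow_mul]
    have hmod := pow_eq_pow_iff_modEq.1 hpow
    rw [hord] at hmod
    have hts : t = s := by
      have h1' : t * 2 < q - 1 := by omega
      have h2' : s * 2 < q - 1 := by omega
      have := hmod
      unfold Nat.ModEq at this
      rw [Nat.mod_eq_of_lt h1', Nat.mod_eq_of_lt h2'] at this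
      omega
    subst hts
    have : (2:F) * (ω : F) ^ t = 0 := by linear_combination heq
    exact mul_ne_zero two_ne (pow_ne_zero _ (Units.ne_zero ω)) this
  -- coordinates of points of Γ lie in S
  have hmemS : ∀ u ∈ Γ, (∃ t < r, u.1 = (ω : F) ^ t) ∧ (∃ t < r, u.2 = (ω : F) ^ t) :=
    fun u hu => ⟨(hΓS hu).1, (hΓS hu).2⟩
  have hnz : ∀ u ∈ Γ, u.1 ≠ 0 ∧ u.2 ≠ 0 :=
    fun u hu => ⟨Snz _ (hmemS u hu).1, Snz _ (hmemS u hu).2⟩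
  have hmix : ∀ u ∈ Γ, ∀ v ∈ Γ, u.1 ≠ -v.1 ∧ u.2 ≠ -v.2 :=
    fun u hu v hv => ⟨Ssum _ _ (hmemS u hu).1 (hmemS v hv).1,
      Ssum _ _ (hmemS u hu).2 (hmemS v hv).2⟩
  -- Claim 1
  have claim1 : ∀ u ∈ Γ, (Sig u).ncard = 4 := by
    intro u hu
    obtain ⟨hi0, hj0⟩ := hnz u hu
    obtain ⟨hni, hnj⟩ := hmix u hu u hu
    obtain ⟨i, j⟩ := u
    rw [hSig]
    simp only
    rw [Set.ncard_insert_of_notMem (by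
        simp only [Set.mem_insert_iff, Set.mem_singleton_iff, Prod.mk.injEq, not_or]
        refine ⟨fun h => hni h.1, fun h => hnj h.2, fun h => hni h.1⟩) (Set.toFinite _),
      Set.ncard_insert_of_notMem (by
        simp only [Set.mem_insert_iff, Set.mem_singleton_iff, Prod.mk.injEq, not_or]
        exact ⟨fun h => hnj h.2, fun h => hnj h.2⟩) (Set.toFinite _),
      Set.ncard_insert_of_notMem (by
        simp only [Set.mem_singleton_iff, Prod.mk.injEq, not_and]
        exact fun h => absurd h hni) (Set.toFinite _),
      Set.ncard_singleton]
  -- Claim 2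
  have claim2 : ∀ u ∈ Γ, ∀ v ∈ Γ, u ≠ v → Disjoint (Sig u) (Sig v) := by
    intro u hu v hv huv
    have key_ii : u.1 = v.1 → False := fun h => huv (h1 hu hv h)
    have key_jj : u.2 = v.2 → False := fun h => huv (h2 hu hv h)
    have key_ii' : u.1 = -v.1 → False := fun h => (hmix u hu v hv).1 h
    obtain ⟨i, j⟩ := u
    obtain ⟨i', j'⟩ := v
    simp only at key_ii key_jj key_ii'
    rw [Set.disjoint_left]
    intro p hp hq
    rw [hSig] at hp hq
    simp only [Set.mem_insert_iff, Set.mem_singleton_iff] at hp hq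
    rcases hp with rfl|rfl|rfl|rfl <;>
      rcases hq with hq|hq|hq|hq <;>
      · rw [Prod.mk.injEq] at hq
        obtain ⟨ha, hb⟩ := hq
        first
          | exact key_ii (by linear_combination ha)
          | exact key_ii (by linear_combination -ha)
          | exact key_ii' (by linear_combination ha)
          | exact key_ii' (by linear_combination -ha)
  -- Claim 3
  have claim3 : (⋃ u ∈ Γ, Sig u).ncard = 4 * Γ.ncard := by
    have main : ∀ s : Set (F × F), s.Finite → s ⊆ Γ →
        (⋃ u ∈ s, Sig u).ncard = 4 * s.ncard := by
      intro s hs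
      refine Set.Finite.induction_on
        (motive := fun s _ => s ⊆ Γ → (⋃ u ∈ s, Sig u).ncard = 4 * s.ncard) s hs
        (by simp) ?_
      intro a s ha hsf ih hsub
      have haΓ : a ∈ Γ := hsub (Set.mem_insert a s)
      have hsΓ : s ⊆ Γ := fun x hx => hsub (Set.mem_insert_of_mem a hx)
      rw [Set.biUnion_insert]
      rw [Set.ncard_union_eq ?_ (Set.toFinite _) (Set.toFinite _)]
      · rw [ih hsΓ, Set.ncard_insert_of_notMem ha hsf, claim1 a haΓ]
        ring
      · rw [Set.disjoint_iUnion₂_right]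
        intro u hus
        exact claim2 a haΓ u (hsΓ hus) (fun h => ha (h ▸ hus))
    exact main Γ (Set.toFinite Γ) subset_rfl
  -- Claim 4
  refine ⟨claim1, claim2, claim3, ?_⟩
  intro u hu v hv p₁ hp₁ p₂ hp₂ p₃ hp₃ hq12 hq13 hq23 hcol
  obtain ⟨hi0, hj0⟩ := hnz u hu
  obtain ⟨hi0', hj0'⟩ := hnz v hv
  by_cases huv : u = v
  · -- all three points in the same quadruple
    subst huv
    rw [Set.union_self] at hp₁ hp₂ hp₃
    obtain ⟨i, j⟩ := u
    simp only at hi0 hj0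
    rw [hSig] at hp₁ hp₂ hp₃
    obtain ⟨e₁, d₁, he₁, hd₁, rfl⟩ := stmt7_mem_sig hp₁
    obtain ⟨e₂, d₂, he₂, hd₂, rfl⟩ := stmt7_mem_sig hp₂
    obtain ⟨e₃, d₃, he₃, hd₃, rfl⟩ := stmt7_mem_sig hp₃
    exact stmt7_helperA two_ne i j hi0 hj0 e₁ d₁ e₂ d₂ e₃ d₃ he₁ hd₁ he₂ hd₂ he₃ hd₃
      (stmt7_pair_ne hq12) (stmt7_pair_ne hq13) (stmt7_pair_ne hq23)
      (stmt7_collinear_det hcol)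
  · -- u ≠ v
    have nii : ∀ s : F, s = 1 ∨ s = -1 → v.1 ≠ s * u.1 := by
      rintro s (rfl|rfl)
      · rw [one_mul]; exact fun h => huv (h1 hu hv h.symm)
      · rw [neg_one_mul]; exact (hmix v hv u hu).1
    have njj : ∀ s : F, s = 1 ∨ s = -1 → v.2 ≠ s * u.2 := by
      rintro s (rfl|rfl)
      · rw [one_mul]; exact fun h => huv (h2 hu hv h.symm)
      · rw [neg_one_mul]; exact (hmix v hv u hu).2
    have nii' : ∀ s : F, s = 1 ∨ s = -1 → u.1 ≠ s * v.1 := by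
      rintro s (rfl|rfl)
      · rw [one_mul]; exact fun h => huv (h1 hu hv h)
      · rw [neg_one_mul]; exact (hmix u hu v hv).1
    have njj' : ∀ s : F, s = 1 ∨ s = -1 → u.2 ≠ s * v.2 := by
      rintro s (rfl|rfl)
      · rw [one_mul]; exact fun h => huv (h2 hu hv h)
      · rw [neg_one_mul]; exact (hmix u hu v hv).2
    have nx : ∀ s : F, s = 1 ∨ s = -1 → u.2 * v.1 ≠ s * (v.2 * u.1) := by
      rintro s (rfl|rfl)
      · rw [one_mul]; exact (h3 u hu v hv huv).1
      · rw [neg_one_mul]; exact (h3 u hu v hv huv).2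
    have nx' : ∀ s : F, s = 1 ∨ s = -1 → v.2 * u.1 ≠ s * (u.2 * v.1) := by
      rintro s (rfl|rfl)
      · rw [one_mul]; exact (h3 v hv u hu (Ne.symm huv)).1
      · rw [neg_one_mul]; exact (h3 v hv u hu (Ne.symm huv)).2
    obtain ⟨i, j⟩ := u
    obtain ⟨i', j'⟩ := v
    simp only at hi0 hj0 hi0' hj0' nii njj nii' njj' nx nx'
    rw [hSig] at hp₁ hp₂ hp₃
    have M : ∀ p : F × F,
        p ∈ ({((i,j).1, (i,j).2), (-(i,j).1, (i,j).2), ((i,j).1, -(i,j).2),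
              (-(i,j).1, -(i,j).2)} : Set (F × F)) ∪
            ({((i',j').1, (i',j').2), (-(i',j').1, (i',j').2), ((i',j').1, -(i',j').2),
              (-(i',j').1, -(i',j').2)} : Set (F × F)) →
        (∃ e d : F, (e = 1 ∨ e = -1) ∧ (d = 1 ∨ d = -1) ∧ p = (e*i, d*j)) ∨
        (∃ e d : F, (e = 1 ∨ e = -1) ∧ (d = 1 ∨ d = -1) ∧ p = (e*i', d*j')) := by
      intro p hp
      rcases hp with hp|hp
      · exact Or.inl (stmt7_mem_sig hp)
      · exact Or.inr (stmt7_mem_sig hp)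
    rcases M p₁ hp₁ with ⟨e₁, d₁, he₁, hd₁, rfl⟩|⟨e₁, d₁, he₁, hd₁, rfl⟩ <;>
      rcases M p₂ hp₂ with ⟨e₂, d₂, he₂, hd₂, rfl⟩|⟨e₂, d₂, he₂, hd₂, rfl⟩ <;>
      rcases M p₃ hp₃ with ⟨e₃, d₃, he₃, hd₃, rfl⟩|⟨e₃, d₃, he₃, hd₃, rfl⟩
    -- UUU
    · exact stmt7_helperA two_ne i j hi0 hj0 e₁ d₁ e₂ d₂ e₃ d₃ he₁ hd₁ he₂ hd₂ he₃ hd₃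
        (stmt7_pair_ne hq12) (stmt7_pair_ne hq13) (stmt7_pair_ne hq23)
        (stmt7_collinear_det hcol)
    -- UUV : p₁ p₂ from u, p₃ from v
    · exact stmt7_helperB two_ne i j i' j' hi0 hj0 nii njj nx e₁ d₁ e₂ d₂ e₃ d₃
        he₁ hd₁ he₂ hd₂ he₃ hd₃ (stmt7_pair_ne hq12) (stmt7_collinear_det hcol)
    -- UVU : p₁ p₃ from u, p₂ from v; use points (p₁,p₃,p₂)
    · exact stmt7_helperB two_ne i j i' j' hi0 hj0 nii njj nx e₁ d₁ e₃ d₃ e₂ d₂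
        he₁ hd₁ he₃ hd₃ he₂ hd₂ (stmt7_pair_ne hq13)
        (by linear_combination -(stmt7_collinear_det hcol))
    -- UVV : p₁ from u, p₂ p₃ from v; use points (p₂,p₃,p₁) with roles swapped
    · exact stmt7_helperB two_ne i' j' i j hi0' hj0' nii' njj' nx' e₂ d₂ e₃ d₃ e₁ d₁
        he₂ hd₂ he₃ hd₃ he₁ hd₁ (stmt7_pair_ne hq23)
        (by linear_combination (stmt7_collinear_det hcol))
    -- VUU : p₁ from v, p₂ p₃ from u; use points (p₂,p₃,p₁)
    · exact stmt7_helperB two_ne i j i' j' hi0 hj0 nii njj nx e₂ d₂ e₃ d₃ e₁ d₁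
        he₂ hd₂ he₃ hd₃ he₁ hd₁ (stmt7_pair_ne hq23)
        (by linear_combination (stmt7_collinear_det hcol))
    -- VUV : p₁ p₃ from v, p₂ from u; use points (p₁,p₃,p₂) with roles swapped
    · exact stmt7_helperB two_ne i' j' i j hi0' hj0' nii' njj' nx' e₁ d₁ e₃ d₃ e₂ d₂
        he₁ hd₁ he₃ hd₃ he₂ hd₂ (stmt7_pair_ne hq13)
        (by linear_combination -(stmt7_collinear_det hcol))
    -- VVU : p₁ p₂ from v, p₃ from u, roles swapped
    · exact stmt7_helperB two_ne i' j' i j hi0' hj0' nii' njj' nx' e₁ d₁ e₂ d₂ e₃ d₃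
        he₁ hd₁ he₂ hd₂ he₃ hd₃ (stmt7_pair_ne hq12) (stmt7_collinear_det hcol)
    -- VVV
    · exact stmt7_helperA two_ne i' j' hi0' hj0' e₁ d₁ e₂ d₂ e₃ d₃ he₁ hd₁ he₂ hd₂ he₃ hd₃
        (stmt7_pair_ne hq12) (stmt7_pair_ne hq13) (stmt7_pair_ne hq23)
        (stmt7_collinear_det hcol)
end

section
/- Let n be an even positive integer. Then there exists a subset Γ of ZMod n × ZMod n of cardinality n − 1 such that the three maps (i,j) ↦ i, (i,j) ↦ j, and (i,j) ↦ j − i are each injective on Γ. (Equivalently, the cyclic Latin square of order n defined by L(i,j) = j − i + 1 has a partial transversal of length n − 1.) -/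
/-!
Write `n = h + h`. Put the `k`-th cell, `k < n - 1`, in row `k` and column `2k` if `k < h`, and
column `2k + 1` if `h ≤ k`. The first `h` cells fill the even columns and the remaining `h - 1`
cells the odd columns other than `n - 1`; the entries `j - i` are `k` and `k + 1` respectively,
so they are `0, …, h - 1` and `h + 1, …, n - 1`, skipping only `h`.
-/

open Set

theorem ZMod.natCast_injOn_Iio (n : ℕ) : InjOn (Nat.cast : ℕ → ZMod n) (Iio n) := by
  intro a ha b hb hab
  rwa [ZMod.natCast_eq_natCast_iff', Nat.mod_eq_of_lt ha, Nat.mod_eq_of_lt hb] at hab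

namespace CyclicLatinSquare

/-- `2 * (k - h) + 1` is the representative in `[0, h + h)` of `2k + 1`. -/
def transversalColumn (h k : ℕ) : ℕ := if k < h then 2 * k else 2 * (k - h) + 1

def transversalEntry (h k : ℕ) : ℕ := if k < h then k else k + 1

def transversalCell (h k : ℕ) : ZMod (h + h) × ZMod (h + h) := (k, transversalColumn h k)

variable (h : ℕ)

theorem transversalColumn_mapsTo :
    MapsTo (transversalColumn h) (Iio (h + h - 1)) (Iio (h + h)) := by
  intro k hk
  simp only [mem_Iio, transversalColumn] at *
  split <;> omega

theorem transversalColumn_injOn : InjOn (transversalColumn h) (Iio (h + h - 1)) := by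
  intro a _ b _ hab
  simp only [transversalColumn] at hab
  split at hab <;> split at hab <;> omega

theorem transversalEntry_mapsTo :
    MapsTo (transversalEntry h) (Iio (h + h - 1)) (Iio (h + h)) := by
  intro k hk
  simp only [mem_Iio, transversalEntry] at *
  split <;> omega

theorem transversalEntry_injective : Function.Injective (transversalEntry h) := by
  intro a b hab
  simp only [transversalEntry] at hab
  split at hab <;> split at hab <;> omega

theorem natCast_transversalColumn_sub (k : ℕ) :
    (transversalColumn h k : ZMod (h + h)) - k = transversalEntry h k := by
  unfold transversalColumn transversalEntry
  split_ifs with hk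
  · push_cast
    ring
  · have hzero : ((h + h : ℕ) : ZMod (h + h)) = 0 := ZMod.natCast_self _
    rw [Nat.cast_add, Nat.cast_mul, Nat.cast_sub (not_lt.mp hk)]
    push_cast at hzero ⊢
    linear_combination -hzero

end CyclicLatinSquare

open CyclicLatinSquare in
theorem stmt_9_general (n : ℕ) (heven : Even n) :
    ∃ Γ : Set (ZMod n × ZMod n), Γ.ncard = n - 1 ∧
      Set.InjOn (fun p : ZMod n × ZMod n => p.1) Γ ∧
      Set.InjOn (fun p : ZMod n × ZMod n => p.2) Γ ∧
      Set.InjOn (fun p : ZMod n × ZMod n => p.2 - p.1) Γ := by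
  obtain ⟨h, rfl⟩ := heven
  set s := Iio (h + h - 1)
  have hcast : InjOn (Nat.cast : ℕ → ZMod (h + h)) (Iio (h + h)) := ZMod.natCast_injOn_Iio _
  have hrow : InjOn (Prod.fst ∘ transversalCell h) s :=
    hcast.mono (Iio_subset_Iio (by omega))
  have hcolumn : InjOn (Prod.snd ∘ transversalCell h) s :=
    hcast.comp (transversalColumn_injOn h) (transversalColumn_mapsTo h)
  have hentry : InjOn ((fun p => p.2 - p.1) ∘ transversalCell h) s := by
    have := hcast.comp (transversalEntry_injective h).injOn (transversalEntry_mapsTo h)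
    simpa only [Function.comp_def, transversalCell, natCast_transversalColumn_sub] using this
  refine ⟨transversalCell h '' s, ?_, hrow.image_of_comp, hcolumn.image_of_comp,
    hentry.image_of_comp⟩
  rw [hrow.of_comp.ncard_image, ncard_Iio_nat]

/-- For even `n > 0`, the cyclic Latin square of order `n` given by `L(i,j) = j - i + 1`
on `ZMod n` has a partial transversal of length `n - 1`: a set `Γ` of `n - 1` cells with
pairwise distinct rows, pairwise distinct columns and pairwise distinct entries. -/
theorem stmt_9 (n : ℕ) (hn : 0 < n) (heven : Even n) :
    ∃ Γ : Set (ZMod n × ZMod n), Γ.ncard = n - 1 ∧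
      Set.InjOn (fun p : ZMod n × ZMod n => p.1) Γ ∧
      Set.InjOn (fun p : ZMod n × ZMod n => p.2) Γ ∧
      Set.InjOn (fun p : ZMod n × ZMod n => p.2 - p.1) Γ :=
  stmt_9_general n heven
end

section
/- Let q be a prime power and m ≥ 2 an integer. Suppose there exist m pairwise disjoint 4-element subsets S_1, …, S_m of the projective plane PG(2,q) (points being 1-dimensional subspaces of 𝔽_q³) such that for all indices a ≠ b, no three distinct points of S_a ∪ S_b lie on a common projective line (equivalently, any three vectors representing three distinct points of S_a ∪ S_b are linearly independent over 𝔽_q). Then, with n = 4m, there exists an 𝔽_q-linear subspace C of (Fin n → 𝔽_q) of dimension k = 3m − 3 such that: (i) every nonzero codeword of C has Hamming weight at least 6 and some nonzero codeword has Hamming weight exactly 6; and (ii) there is a partition of Fin n into m blocks of size 4 such that for every block R there exists v ∈ (Fin n → 𝔽_q) with v i ≠ 0 for all i ∈ R, v i = 0 for i ∉ R, and Σ_i v i · c i = 0 for all c ∈ C. Moreover 6 = n − k − ⌈k/3⌉ + 2, so C is a Singleton-optimal (n, k, 6; 3) locally repairable code with disjoint repair groups. -/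
set_option linter.unusedSectionVars false
set_option maxHeartbeats 1000000

namespace Stmt17Aux

open Matrix Finset

variable {F : Type} [Field F] [DecidableEq F]

/-- Matrix whose rows are the first three of four given vectors. -/
noncomputable def Amat (v : Fin 4 → Fin 3 → F) : Matrix (Fin 3) (Fin 3) F :=
  Matrix.of fun i j => v i.castSucc j

/-- Coefficients expressing the fourth vector in terms of the first three. -/
noncomputable def kap (v : Fin 4 → Fin 3 → F) : Fin 3 → F :=
  (v (Fin.last 3)) ᵥ* (Amat v)⁻¹

noncomputable def eps (v : Fin 4 → Fin 3 → F) : Fin 4 → F :=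
  Fin.snoc (fun j => (kap v j)⁻¹) (-1)

/-- The block map. -/
noncomputable def phi (v : Fin 4 → Fin 3 → F) : (Fin 4 → F) →ₗ[F] (Fin 3 → F) where
  toFun x := (Amat v)⁻¹ *ᵥ fun i => (kap v i)⁻¹ * x i.castSucc
  map_add' x y := by
    have h : (fun i => (kap v i)⁻¹ * (x + y) i.castSucc)
        = (fun i => (kap v i)⁻¹ * x i.castSucc) + (fun i => (kap v i)⁻¹ * y i.castSucc) := by
      funext i; simp [mul_add]
    show (Amat v)⁻¹ *ᵥ (fun i => (kap v i)⁻¹ * (x + y) i.castSucc)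
        = ((Amat v)⁻¹ *ᵥ fun i => (kap v i)⁻¹ * x i.castSucc)
          + ((Amat v)⁻¹ *ᵥ fun i => (kap v i)⁻¹ * y i.castSucc)
    rw [h, Matrix.mulVec_add]
  map_smul' t x := by
    have h : (fun i => (kap v i)⁻¹ * (t • x) i.castSucc)
        = t • (fun i => (kap v i)⁻¹ * x i.castSucc) := by
      funext i; simp only [Pi.smul_apply, smul_eq_mul]; ring
    simp only [RingHom.id_apply]
    show (Amat v)⁻¹ *ᵥ (fun i => (kap v i)⁻¹ * (t • x) i.castSucc)
        = t • ((Amat v)⁻¹ *ᵥ fun i => (kap v i)⁻¹ * x i.castSucc)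
    rw [h, Matrix.mulVec_smul]

lemma isUnit_det_of_rows (M : Matrix (Fin 3) (Fin 3) F)
    (h : LinearIndependent F (fun i => M i)) : IsUnit M.det := by
  rw [isUnit_iff_ne_zero]
  intro h0
  obtain ⟨g, hg, hgz⟩ := Matrix.exists_vecMul_eq_zero_iff.mpr h0
  refine hg (funext fun i => ?_)
  refine Fintype.linearIndependent_iff.mp h g ?_ i
  funext j
  have := congrFun hgz j
  simpa [Matrix.vecMul, dotProduct, Finset.sum_apply] using this

lemma kap_vecMul (v : Fin 4 → Fin 3 → F) (hA : IsUnit (Amat v).det) :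
    kap v ᵥ* Amat v = v (Fin.last 3) := by
  rw [kap, Matrix.vecMul_vecMul, Matrix.nonsing_inv_mul _ hA, Matrix.vecMul_one]

lemma v_last_eq (v : Fin 4 → Fin 3 → F) (hA : IsUnit (Amat v).det) (j : Fin 3) :
    v (Fin.last 3) j = ∑ t : Fin 3, kap v t * v t.castSucc j := by
  conv_lhs => rw [← kap_vecMul v hA]
  simp [Matrix.vecMul, dotProduct, Amat]

lemma kap_ne (v : Fin 4 → Fin 3 → F) (hA : IsUnit (Amat v).det)
    (h1 : ∀ i j k : Fin 4, i ≠ j → i ≠ k → j ≠ k →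
      LinearIndependent F ![v i, v j, v k]) :
    ∀ t, kap v t ≠ 0 := by
  have key : ∀ (t s r : Fin 3), t ≠ s → t ≠ r → s ≠ r → kap v t = 0 → False := by
    intro t s r hts htr hsr h0
    have li := h1 s.castSucc r.castSucc (Fin.last 3)
      (by simp [Fin.ext_iff]; omega)
      (by simp [Fin.ext_iff]; omega)
      (by simp [Fin.ext_iff]; omega)
    have hdep : ∑ w : Fin 3, (![kap v s, kap v r, (-1 : F)]) w •
        (![v s.castSucc, v r.castSucc, v (Fin.last 3)]) w = 0 := by
      funext j
      have hexp := v_last_eq v hA j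
      have huniv : (Finset.univ : Finset (Fin 3)) = {t, s, r} := by
        have : ({t, s, r} : Finset (Fin 3)).card = 3 := by
          rw [Finset.card_insert_of_notMem (by simp [hts, htr]),
            Finset.card_insert_of_notMem (by simp [hsr])]
          simp
        exact (Finset.eq_univ_of_card _ (by simp [this])).symm
      rw [huniv, Finset.sum_insert (by simp [hts, htr]),
        Finset.sum_insert (by simp [hsr]), Finset.sum_singleton, h0] at hexp
      simp only [Finset.sum_apply, Pi.smul_apply, smul_eq_mul, Fin.sum_univ_three]
      simp only [Matrix.cons_val_zero, Matrix.cons_val_one, Matrix.head_cons,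
        Matrix.cons_val_two, Matrix.tail_cons]
      simp only [Pi.zero_apply]
      rw [hexp]; ring
    have := Fintype.linearIndependent_iff.mp li _ hdep 2
    simp at this
  intro t h0
  rcases (by omega : t.val = 0 ∨ t.val = 1 ∨ t.val = 2) with h | h | h
  · exact key t ⟨1, by omega⟩ ⟨2, by omega⟩ (by simp [Fin.ext_iff]; omega)
      (by simp [Fin.ext_iff]; omega) (by simp [Fin.ext_iff]) h0
  · exact key t ⟨0, by omega⟩ ⟨2, by omega⟩ (Fin.ne_of_val_ne (by rw [h]; exact Nat.succ_ne_zero _))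
      (by simp [Fin.ext_iff]; omega) (by simp [Fin.ext_iff]) h0
  · exact key t ⟨0, by omega⟩ ⟨1, by omega⟩ (Fin.ne_of_val_ne (by rw [h]; exact Nat.succ_ne_zero _))
      (by simp [Fin.ext_iff]; omega) (by simp [Fin.ext_iff]) h0

lemma eps_ne (v : Fin 4 → Fin 3 → F) (hk : ∀ t, kap v t ≠ 0) (i : Fin 4) :
    eps v i ≠ 0 := by
  induction i using Fin.lastCases with
  | last => simp only [eps, Fin.snoc_last]; exact neg_ne_zero.mpr one_ne_zero
  | cast j => simp only [eps, Fin.snoc_castSucc]; exact inv_ne_zero (hk j)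

/-- The key pairing identity. -/
lemma pairing (v : Fin 4 → Fin 3 → F) (hA : IsUnit (Amat v).det)
    (hk : ∀ t, kap v t ≠ 0) (x : Fin 4 → F) (hx : ∑ i, x i = 0) (i : Fin 4) :
    v i ⬝ᵥ phi v x = eps v i * x i := by
  induction i using Fin.lastCases with
  | last =>
    have h1 : v (Fin.last 3) ⬝ᵥ phi v x
        = kap v ⬝ᵥ (fun t => (kap v t)⁻¹ * x t.castSucc) := by
      rw [show (phi v x : Fin 3 → F)
          = (Amat v)⁻¹ *ᵥ (fun t => (kap v t)⁻¹ * x t.castSucc) from rfl,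
        Matrix.dotProduct_mulVec]
      rfl
    rw [h1]
    have h2 : kap v ⬝ᵥ (fun t => (kap v t)⁻¹ * x t.castSucc)
        = ∑ t : Fin 3, x t.castSucc := by
      simp only [dotProduct]
      exact Finset.sum_congr rfl fun t _ => mul_inv_cancel_left₀ (hk t) _
    rw [h2]
    have h3 : ∑ t : Fin 3, x t.castSucc = - x (Fin.last 3) := by
      rw [Fin.sum_univ_castSucc] at hx
      exact eq_neg_of_add_eq_zero_left hx
    rw [h3, eps, Fin.snoc_last]; ring
  | cast j =>
    have h1 : v j.castSucc ⬝ᵥ phi v x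
        = ((Amat v) *ᵥ ((Amat v)⁻¹ *ᵥ fun i => (kap v i)⁻¹ * x i.castSucc)) j := by
      rfl
    rw [h1, Matrix.mulVec_mulVec, Matrix.mul_nonsing_inv _ hA, Matrix.one_mulVec,
      eps, Fin.snoc_castSucc]

lemma phi_eq_zero (v : Fin 4 → Fin 3 → F) (hA : IsUnit (Amat v).det)
    (hk : ∀ t, kap v t ≠ 0) (x : Fin 4 → F) (hx : ∑ i, x i = 0)
    (h0 : phi v x = 0) : x = 0 := by
  funext i
  have h := pairing v hA hk x hx i
  rw [h0, dotProduct_zero] at h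
  have := (mul_eq_zero.mp h.symm).resolve_left (eps_ne v hk i)
  simpa using this

/-- Explicit preimage for `phi` with prescribed coordinate sum. -/
noncomputable def sol (v : Fin 4 → Fin 3 → F) (w : Fin 3 → F) (s : F) : Fin 4 → F :=
  Fin.snoc (fun t => kap v t * ((Amat v) *ᵥ w) t)
    (s - ∑ t : Fin 3, kap v t * ((Amat v) *ᵥ w) t)

lemma sum_sol (v : Fin 4 → Fin 3 → F) (w : Fin 3 → F) (s : F) :
    ∑ i, sol v w s i = s := by
  rw [Fin.sum_univ_castSucc]
  simp only [sol, Fin.snoc_castSucc, Fin.snoc_last]; ring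

lemma phi_sol (v : Fin 4 → Fin 3 → F) (hA : IsUnit (Amat v).det)
    (hk : ∀ t, kap v t ≠ 0) (w : Fin 3 → F) (s : F) :
    phi v (sol v w s) = w := by
  show (Amat v)⁻¹ *ᵥ (fun i => (kap v i)⁻¹ * sol v w s i.castSucc) = w
  have h1 : (fun i => (kap v i)⁻¹ * sol v w s i.castSucc) = (Amat v) *ᵥ w := by
    funext i
    simp only [sol, Fin.snoc_castSucc]
    exact inv_mul_cancel_left₀ (hk i) _
  rw [h1, Matrix.mulVec_mulVec, Matrix.nonsing_inv_mul _ hA, Matrix.one_mulVec]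

lemma eq_zero_of_dot (w : Fin 3 → Fin 3 → F) (h : LinearIndependent F w)
    (z : Fin 3 → F) (hz : ∀ t, w t ⬝ᵥ z = 0) : z = 0 := by
  have hA : IsUnit (Matrix.of w).det := isUnit_det_of_rows _ (by exact h)
  have h1 : (Matrix.of w) *ᵥ z = 0 := by
    funext t; simpa [Matrix.mulVec, Matrix.of_apply] using hz t
  calc z = ((Matrix.of w)⁻¹ * (Matrix.of w)) *ᵥ z := by
        rw [Matrix.nonsing_inv_mul _ hA, Matrix.one_mulVec]
    _ = (Matrix.of w)⁻¹ *ᵥ ((Matrix.of w) *ᵥ z) := by rw [Matrix.mulVec_mulVec]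
    _ = 0 := by rw [h1, Matrix.mulVec_zero]

/-! ### Global structure -/

/-- restriction of a vector to a block -/
def res (m : ℕ) (a : Fin m) (c : Fin (4 * m) → F) : Fin 4 → F :=
  fun i => c (finProdFinEquiv (i, a))

/-- embedding of a local vector in a block -/
def emb (m : ℕ) (a : Fin m) (x : Fin 4 → F) : Fin (4 * m) → F :=
  fun p => if (finProdFinEquiv.symm p).2 = a then x (finProdFinEquiv.symm p).1 else 0

lemma res_emb (m : ℕ) (a b : Fin m) (x : Fin 4 → F) :
    res m a (emb m b x) = if b = a then x else 0 := by
  funext i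
  simp only [res, emb, Equiv.symm_apply_apply]
  by_cases h : b = a
  · subst h; simp
  · rw [if_neg (fun hh => h hh.symm), if_neg h]
    simp

noncomputable def Psi (m : ℕ) (v : Fin m → Fin 4 → Fin 3 → F) :
    (Fin (4 * m) → F) →ₗ[F] ((Fin m → F) × (Fin 3 → F)) where
  toFun c := (fun a => ∑ i, res m a c i, ∑ a, phi (v a) (res m a c))
  map_add' c c' := by
    have hres : ∀ a, res m a (c + c') = res m a c + res m a c' := fun a => rfl
    refine Prod.ext ?_ ?_
    · funext a
      simp [hres a, Finset.sum_add_distrib]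
    · simp only [hres, map_add, Finset.sum_add_distrib]; rfl
  map_smul' t c := by
    have hres : ∀ a, res m a (t • c) = t • res m a c := fun a => rfl
    refine Prod.ext ?_ ?_
    · funext a
      simp [hres, Finset.mul_sum]
    · simp only [hres, _root_.map_smul]
      rw [← Finset.smul_sum]
      rfl

lemma mem_C_iff (m : ℕ) (v : Fin m → Fin 4 → Fin 3 → F) (c : Fin (4 * m) → F) :
    c ∈ LinearMap.ker (Psi m v) ↔
      (∀ a, ∑ i, res m a c i = 0) ∧ (∑ a, phi (v a) (res m a c)) = 0 := by
  rw [LinearMap.mem_ker]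
  constructor
  · intro h
    exact ⟨fun a => congrFun (congrArg Prod.fst h) a, congrArg Prod.snd h⟩
  · rintro ⟨h1, h2⟩
    refine Prod.ext ?_ ?_
    · exact funext h1
    · exact h2

/-- Hamming weight of a local vector. -/
def wt {n : ℕ} (x : Fin n → F) : ℕ :=
  (Finset.univ.filter fun i => x i ≠ 0).card

lemma wt_le {n : ℕ} (x : Fin n → F) : wt x ≤ n := by
  refine le_trans (Finset.card_filter_le _ _) ?_
  simp

lemma wt_zero {n : ℕ} : wt (0 : Fin n → F) = 0 := by
  simp [wt]

lemma two_le_wt (x : Fin 4 → F) (hs : ∑ i, x i = 0) (hx : x ≠ 0) : 2 ≤ wt x := by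
  obtain ⟨i, hi⟩ := Function.ne_iff.mp hx
  simp only [Pi.zero_apply] at hi
  have hexj : ∃ j, j ≠ i ∧ x j ≠ 0 := by
    by_contra h
    push_neg at h
    have hsum : ∑ j, x j = x i :=
      Finset.sum_eq_single i (fun b _ hb => h b hb) (fun hmem => absurd (Finset.mem_univ i) hmem)
    exact hi (by rw [← hsum, hs])
  obtain ⟨j, hji, hj⟩ := hexj
  have hsub : ({i, j} : Finset (Fin 4)) ⊆ Finset.univ.filter (fun t => x t ≠ 0) := by
    intro t ht
    simp only [Finset.mem_insert, Finset.mem_singleton] at ht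
    refine Finset.mem_filter.mpr ⟨Finset.mem_univ _, ?_⟩
    rcases ht with rfl | rfl <;> assumption
  calc 2 = ({i, j} : Finset (Fin 4)).card := (Finset.card_pair fun h => hji h.symm).symm
    _ ≤ _ := Finset.card_le_card hsub

lemma ncard_eq (m : ℕ) (c : Fin (4 * m) → F) :
    {i | c i ≠ 0}.ncard = ∑ a, wt (res m a c) := by
  rw [Set.ncard_eq_toFinset_card', Set.toFinset_setOf]
  have hre : (Finset.univ.filter fun p => c p ≠ 0).card
      = (Finset.univ.filter fun pr : Fin 4 × Fin m => c (finProdFinEquiv pr) ≠ 0).card := by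
    refine Finset.card_equiv finProdFinEquiv.symm fun p => ?_
    simp only [Finset.mem_filter, Finset.mem_univ, true_and]
    rw [Equiv.apply_symm_apply]
  rw [hre, Finset.card_eq_sum_card_fiberwise
    (f := Prod.snd) (t := Finset.univ) (fun p _ => Finset.mem_univ p.2)]
  refine Finset.sum_congr rfl fun a _ => ?_
  rw [Finset.filter_filter, wt]
  refine Finset.card_bij' (fun pr _ => pr.1) (fun i _ => (i, a)) ?_ ?_ ?_ ?_
  · intro pr hpr
    simp only [Finset.mem_filter, Finset.mem_univ, true_and] at hpr ⊢
    have : (pr.1, a) = pr := by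
      rw [← hpr.2]
    rw [res, this]
    exact hpr.1
  · intro i hi
    simp only [Finset.mem_filter, Finset.mem_univ, true_and] at hi ⊢
    exact ⟨hi, trivial⟩
  · intro pr hpr
    simp only [Finset.mem_filter, Finset.mem_univ, true_and] at hpr
    exact Prod.ext rfl hpr.2.symm
  · intro i _
    rfl

end Stmt17Aux

open Stmt17Aux Matrix in
private theorem stmt_17_aux (m : ℕ) (hm : 2 ≤ m) {F : Type} [Field F] [DecidableEq F]
    (v : Fin m → Fin 4 → Fin 3 → F)
    (h1 : ∀ a, ∀ i j k : Fin 4, i ≠ j → i ≠ k → j ≠ k →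
      LinearIndependent F ![v a i, v a j, v a k])
    (h2 : ∀ a b, a ≠ b → ∀ i j : Fin 4, i ≠ j → ∀ k,
      LinearIndependent F ![v a i, v a j, v b k]) :
    ∃ C : Submodule F (Fin (4 * m) → F),
      Module.finrank F C = 3 * m - 3 ∧
      (∀ c : Fin (4 * m) → F, c ∈ C → c ≠ 0 → 6 ≤ Set.ncard {i | c i ≠ 0}) ∧
      (∃ c : Fin (4 * m) → F, c ∈ C ∧ c ≠ 0 ∧ Set.ncard {i | c i ≠ 0} = 6) ∧
      (∃ B : Fin m → Finset (Fin (4 * m)),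
        (∀ a b, a ≠ b → Disjoint (B a) (B b)) ∧
        (∀ a, (B a).card = 4) ∧
        (Finset.univ.biUnion B = Finset.univ) ∧
        ∀ a, ∃ v : Fin (4 * m) → F,
          (∀ i ∈ B a, v i ≠ 0) ∧ (∀ i ∉ B a, v i = 0) ∧
          ∀ c : Fin (4 * m) → F, c ∈ C → ∑ i, v i * c i = 0) ∧
      (6 : ℕ) = 4 * m - (3 * m - 3) - ((3 * m - 3) + 2) / 3 + 2 := by
  classical
  -- per-block nondegeneracy facts
  have hA : ∀ a, IsUnit (Amat (v a)).det := by
    intro a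
    refine isUnit_det_of_rows _ ?_
    have he : (fun i => (Amat (v a)) i) = ![v a ((0 : Fin 3).castSucc),
        v a ((1 : Fin 3).castSucc), v a ((2 : Fin 3).castSucc)] := by
      funext t j
      fin_cases t <;> rfl
    rw [he]
    exact h1 a _ _ _ (by decide) (by decide) (by decide)
  have hk : ∀ a t, kap (v a) t ≠ 0 := fun a => kap_ne (v a) (hA a) (h1 a)
  -- the cross-block impossibility
  have cross : ∀ a b, a ≠ b → ∀ x y : Fin 4 → F, (∑ i, x i) = 0 → (∑ i, y i) = 0 →
      x ≠ 0 → wt x ≤ 2 → wt y ≤ 3 → phi (v a) x + phi (v b) y = 0 → False := by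
    intro a b hab x y hx0 hy0 hxne hwx hwy hpair
    -- two zero coordinates of x
    have hcx : (Finset.univ.filter fun i => x i = 0).card
        + (Finset.univ.filter fun i => x i ≠ 0).card = 4 := by
      have := Finset.card_filter_add_card_filter_not
        (s := (Finset.univ : Finset (Fin 4))) (p := fun i => x i = 0)
      simpa using this
    have h2le : 1 < (Finset.univ.filter fun i => x i = 0).card := by
      have : wt x = (Finset.univ.filter fun i => x i ≠ 0).card := rfl
      omega
    obtain ⟨j, hj, j', hj', hjj'⟩ := Finset.one_lt_card.mp h2le
    simp only [Finset.mem_filter, Finset.mem_univ, true_and] at hj hj'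
    -- one zero coordinate of y
    have hcy : (Finset.univ.filter fun i => y i = 0).card
        + (Finset.univ.filter fun i => y i ≠ 0).card = 4 := by
      have := Finset.card_filter_add_card_filter_not
        (s := (Finset.univ : Finset (Fin 4))) (p := fun i => y i = 0)
      simpa using this
    have h1le : 0 < (Finset.univ.filter fun i => y i = 0).card := by
      have : wt y = (Finset.univ.filter fun i => y i ≠ 0).card := rfl
      omega
    obtain ⟨k, hkmem⟩ := Finset.card_pos.mp h1le
    simp only [Finset.mem_filter, Finset.mem_univ, true_and] at hkmem
    set z := phi (v a) x with hzdef
    have hzne : z ≠ 0 := fun h0 => hxne (phi_eq_zero (v a) (hA a) (hk a) x hx0 h0)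
    have hp1 : v a j ⬝ᵥ z = 0 := by
      rw [hzdef, pairing (v a) (hA a) (hk a) x hx0 j, hj, mul_zero]
    have hp2 : v a j' ⬝ᵥ z = 0 := by
      rw [hzdef, pairing (v a) (hA a) (hk a) x hx0 j', hj', mul_zero]
    have hzy : z = - phi (v b) y := eq_neg_of_add_eq_zero_left hpair
    have hp3 : v b k ⬝ᵥ z = 0 := by
      rw [hzy, dotProduct_neg, pairing (v b) (hA b) (hk b) y hy0 k,
        hkmem, mul_zero, neg_zero]
    refine hzne (eq_zero_of_dot ![v a j, v a j', v b k] (h2 a b hab j j' hjj' k) z ?_)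
    intro t
    fin_cases t
    · exact hp1
    · exact hp2
    · exact hp3
  have hmin : ∀ c : Fin (4 * m) → F, c ∈ LinearMap.ker (Psi m v) → c ≠ 0 →
        6 ≤ Set.ncard {i | c i ≠ 0} := by
      intro c hc hcne
      obtain ⟨hblock, hglob⟩ := (mem_C_iff m v c).mp hc
      rw [ncard_eq]
      set T := Finset.univ.filter (fun a => res m a c ≠ 0) with hT
      have hTzero : ∀ b, b ∉ T → res m b c = 0 := by
        intro b hb
        by_contra hne
        exact hb (Finset.mem_filter.mpr ⟨Finset.mem_univ _, hne⟩)
      have hTne : T.Nonempty := by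
        obtain ⟨p, hp⟩ := Function.ne_iff.mp hcne
        simp only [Pi.zero_apply] at hp
        refine ⟨(finProdFinEquiv.symm p).2, Finset.mem_filter.mpr ⟨Finset.mem_univ _, ?_⟩⟩
        intro h0
        have := congrFun h0 (finProdFinEquiv.symm p).1
        rw [res] at this
        simp only [Prod.mk.eta, Equiv.apply_symm_apply, Pi.zero_apply] at this
        exact hp this
      have hwt2 : ∀ a ∈ T, 2 ≤ wt (res m a c) := by
        intro a ha
        exact two_le_wt _ (hblock a) (Finset.mem_filter.mp ha).2
      have hsumT : ∑ a ∈ T, wt (res m a c) ≤ ∑ a, wt (res m a c) :=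
        Finset.sum_le_sum_of_subset (Finset.subset_univ T)
      rcases lt_or_ge T.card 3 with hc3 | hc3
      · have hc1 : 1 ≤ T.card := Finset.card_pos.mpr hTne
        interval_cases h : T.card
        · -- |T| = 1
          obtain ⟨a, hTa⟩ := Finset.card_eq_one.mp h
          have haT : a ∈ T := hTa ▸ Finset.mem_singleton_self a
          have hother : ∀ b, b ≠ a → res m b c = 0 := by
            intro b hb
            refine hTzero b fun hbT => hb ?_
            rw [hTa] at hbT
            exact Finset.mem_singleton.mp hbT
          have hone : phi (v a) (res m a c) = 0 := by
            have hsum : ∑ a', phi (v a') (res m a' c) = phi (v a) (res m a c) :=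
              Finset.sum_eq_single a (fun b _ hb => by rw [hother b hb, map_zero])
                (fun hmem => absurd (Finset.mem_univ a) hmem)
            rw [← hsum]
            exact hglob
          have := phi_eq_zero (v a) (hA a) (hk a) _ (hblock a) hone
          exact absurd this (Finset.mem_filter.mp haT).2
        · -- |T| = 2
          obtain ⟨a, b, hab, hTab⟩ := Finset.card_eq_two.mp h
          have haT : a ∈ T := by rw [hTab]; simp
          have hbT : b ∈ T := by rw [hTab]; simp
          have hxne : res m a c ≠ 0 := (Finset.mem_filter.mp haT).2
          have hyne : res m b c ≠ 0 := (Finset.mem_filter.mp hbT).2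
          have hpair : phi (v a) (res m a c) + phi (v b) (res m b c) = 0 := by
            have hss : ∑ a' ∈ T, phi (v a') (res m a' c)
                = ∑ a', phi (v a') (res m a' c) := by
              refine Finset.sum_subset (Finset.subset_univ T) fun b' _ hb' => ?_
              rw [hTzero b' hb', map_zero]
            have h0 : ∑ a' ∈ T, phi (v a') (res m a' c) = 0 := by rw [hss]; exact hglob
            rw [hTab, Finset.sum_pair hab] at h0
            exact h0
          have hge : wt (res m a c) + wt (res m b c) ≤ ∑ a', wt (res m a' c) := by
            calc wt (res m a c) + wt (res m b c)
                = ∑ a' ∈ T, wt (res m a' c) := by rw [hTab, Finset.sum_pair hab]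
              _ ≤ _ := hsumT
          by_contra h6
          push_neg at h6
          have hx2 := hwt2 a haT
          have hy2 := hwt2 b hbT
          have hcases : (wt (res m a c) ≤ 2 ∧ wt (res m b c) ≤ 3)
              ∨ (wt (res m b c) ≤ 2 ∧ wt (res m a c) ≤ 3) := by omega
          rcases hcases with ⟨hwx, hwy⟩ | ⟨hwy, hwx⟩
          · exact cross a b hab _ _ (hblock a) (hblock b) hxne hwx hwy hpair
          · refine cross b a (Ne.symm hab) _ _ (hblock b) (hblock a) hyne hwy hwx ?_
            rw [add_comm]
            exact hpair
      · -- |T| ≥ 3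
        calc (6 : ℕ) = 3 * 2 := rfl
          _ ≤ T.card * 2 := by omega
          _ = T.card • 2 := by rw [smul_eq_mul]
          _ ≤ ∑ a ∈ T, wt (res m a c) := Finset.card_nsmul_le_sum T (fun a => wt (res m a c)) 2 hwt2
          _ ≤ _ := hsumT
  refine ⟨LinearMap.ker (Psi m v), ?_, ?_, ?_, ?_, ?_⟩
  -- 1. finrank
  · have hsurj : Function.Surjective (Psi m v) := by
      rintro ⟨lam, w⟩
      have hm0 : 0 < m := by omega
      set a0 : Fin m := ⟨0, hm0⟩ with ha0
      refine ⟨∑ a, emb m a (sol (v a) (if a = a0 then w else 0) (lam a)), ?_⟩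
      have hres : ∀ b, res m b (∑ a, emb m a (sol (v a) (if a = a0 then w else 0) (lam a)))
          = sol (v b) (if b = a0 then w else 0) (lam b) := by
        intro b
        funext i
        have hsum : res m b (∑ a, emb m a (sol (v a) (if a = a0 then w else 0) (lam a))) i
            = ∑ a, res m b (emb m a (sol (v a) (if a = a0 then w else 0) (lam a))) i := by
          simp [res, Finset.sum_apply]
        rw [hsum]
        have : ∀ a, res m b (emb m a (sol (v a) (if a = a0 then w else 0) (lam a))) i
            = if a = b then sol (v a) (if a = a0 then w else 0) (lam a) i else 0 := by
          intro a
          rw [res_emb]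
          by_cases h : a = b <;> simp [h]
        simp only [this]
        rw [Finset.sum_ite_eq' Finset.univ b]
        simp
      refine Prod.ext ?_ ?_
      · funext b
        show ∑ i, res m b _ i = lam b
        rw [hres b]
        exact sum_sol _ _ _
      · show ∑ a, phi (v a) (res m a _) = w
        have : ∀ a, phi (v a) (res m a (∑ a', emb m a' (sol (v a') (if a' = a0 then w else 0) (lam a'))))
            = if a = a0 then w else 0 := by
          intro a
          rw [hres a, phi_sol (v a) (hA a) (hk a)]
        simp only [this]
        rw [Finset.sum_ite_eq' Finset.univ a0]
        simp
    have hrn := LinearMap.finrank_range_add_finrank_ker (Psi m v)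
    rw [LinearMap.range_eq_top.mpr hsurj, finrank_top] at hrn
    have hd1 : Module.finrank F (Fin (4 * m) → F) = 4 * m := by
      rw [Module.finrank_fintype_fun_eq_card, Fintype.card_fin]
    have hd2 : Module.finrank F ((Fin m → F) × (Fin 3 → F)) = m + 3 := by
      rw [Module.finrank_prod, Module.finrank_fintype_fun_eq_card,
        Module.finrank_fintype_fun_eq_card, Fintype.card_fin, Fintype.card_fin]
    rw [hd1, hd2] at hrn
    omega
  -- 2. min weight ≥ 6
  · exact hmin
  -- 3. existence of weight-6 codeword
  · set a0 : Fin m := ⟨0, by omega⟩ with ha0def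
    set b0 : Fin m := ⟨1, by omega⟩ with hb0def
    have hne : a0 ≠ b0 := by
      simp only [ha0def, hb0def, ne_eq, Fin.mk.injEq]
      omega
    set x : Fin 4 → F := ![1, -1, 0, 0] with hxdef
    have hx0 : ∑ i, x i = 0 := by
      simp [hxdef, Fin.sum_univ_four]
    have hxne : x ≠ 0 := by
      intro h
      have := congrFun h 0
      simp [hxdef] at this
    set z : Fin 3 → F := phi (v a0) x with hzdef
    set y : Fin 4 → F := sol (v b0) (-z) 0 with hydef
    have hy0 : ∑ i, y i = 0 := sum_sol _ _ _
    have hphiy : phi (v b0) y = -z := phi_sol (v b0) (hA b0) (hk b0) _ _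
    set c : Fin (4 * m) → F := emb m a0 x + emb m b0 y with hcdef
    have hresc : ∀ a, res m a c
        = (if a0 = a then x else 0) + (if b0 = a then y else 0) := by
      intro a
      have : res m a c = res m a (emb m a0 x) + res m a (emb m b0 y) := rfl
      rw [this, res_emb, res_emb]
    have hresa0 : res m a0 c = x := by
      rw [hresc a0, if_pos rfl, if_neg (fun h => hne h.symm), add_zero]
    have hresb0 : res m b0 c = y := by
      rw [hresc b0, if_pos rfl, if_neg hne, zero_add]
    have hreso : ∀ a, a0 ≠ a → b0 ≠ a → res m a c = 0 := by
      intro a h1' h2'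
      rw [hresc a, if_neg h1', if_neg h2', add_zero]
    have hcmem : c ∈ LinearMap.ker (Psi m v) := by
      rw [mem_C_iff]
      constructor
      · intro a
        by_cases h : a0 = a
        · subst h; rw [hresa0]; exact hx0
        · by_cases h' : b0 = a
          · subst h'; rw [hresb0]; exact hy0
          · rw [hreso a h h']; simp
      · have hterm : ∀ a, phi (v a) (res m a c)
            = (if a0 = a then z else 0) + (if b0 = a then -z else 0) := by
          intro a
          by_cases h : a0 = a
          · subst h
            rw [hresa0, if_pos rfl, if_neg (fun h => hne h.symm), add_zero, hzdef]
          · by_cases h' : b0 = a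
            · subst h'
              rw [hresb0, if_pos rfl, if_neg h, zero_add]
              exact hphiy
            · rw [hreso a h h', if_neg h, if_neg h', add_zero, map_zero]
        simp only [hterm]
        rw [Finset.sum_add_distrib, Finset.sum_ite_eq Finset.univ a0,
          Finset.sum_ite_eq Finset.univ b0]
        simp
    have hcne : c ≠ 0 := by
      intro h
      have h1' := congrFun h (finProdFinEquiv ((0 : Fin 4), a0))
      have : c (finProdFinEquiv ((0 : Fin 4), a0)) = res m a0 c 0 := rfl
      rw [this, hresa0] at h1'
      simp [hxdef] at h1'
    have hwx : wt x = 2 := by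
      have hfe : (Finset.univ.filter fun i => x i ≠ 0) = ({0, 1} : Finset (Fin 4)) := by
        ext i
        fin_cases i <;> simp [hxdef]
      rw [wt, hfe]
      decide
    have hwy4 : wt y ≤ 4 := wt_le y
    have hncard : {i | c i ≠ 0}.ncard = wt x + wt y := by
      rw [ncard_eq m c]
      have hsub : ∑ a ∈ ({a0, b0} : Finset (Fin m)), wt (res m a c)
          = ∑ a, wt (res m a c) := by
        refine Finset.sum_subset (Finset.subset_univ _) fun b' _ hb' => ?_
        simp only [Finset.mem_insert, Finset.mem_singleton] at hb'
        push_neg at hb'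
        rw [hreso b' (fun h => hb'.1 h.symm) (fun h => hb'.2 h.symm), wt_zero]
      rw [← hsub, Finset.sum_pair hne, hresa0, hresb0]
    have h6 := hmin c hcmem hcne
    rw [hncard, hwx] at h6
    refine ⟨c, hcmem, hcne, ?_⟩
    rw [hncard, hwx]
    omega
  -- 4. blocks and parity checks
  · refine ⟨fun a => Finset.univ.image (fun i : Fin 4 => finProdFinEquiv (i, a)), ?_, ?_, ?_, ?_⟩
    · intro a b hab
      rw [Finset.disjoint_left]
      intro p hpa hpb
      simp only [Finset.mem_image, Finset.mem_univ, true_and] at hpa hpb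
      obtain ⟨i, hi⟩ := hpa
      obtain ⟨j, hj⟩ := hpb
      rw [← hj] at hi
      have h := finProdFinEquiv.injective hi
      exact hab (congrArg Prod.snd h)
    · intro a
      rw [Finset.card_image_of_injective _ (fun i j h => by
        have := finProdFinEquiv.injective h
        exact ((Prod.mk.injEq _ _ _ _).mp this).1)]
      simp
    · refine Finset.eq_univ_of_forall fun p => ?_
      rw [Finset.mem_biUnion]
      refine ⟨(finProdFinEquiv.symm p).2, Finset.mem_univ _, ?_⟩
      simp only [Finset.mem_image, Finset.mem_univ, true_and]
      exact ⟨(finProdFinEquiv.symm p).1, by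
        rw [show ((finProdFinEquiv.symm p).1, (finProdFinEquiv.symm p).2)
            = finProdFinEquiv.symm p from rfl, Equiv.apply_symm_apply]⟩
    · intro a
      refine ⟨fun p => if (finProdFinEquiv.symm p).2 = a then 1 else 0, ?_, ?_, ?_⟩
      · intro p hp
        simp only [Finset.mem_image, Finset.mem_univ, true_and] at hp
        obtain ⟨i, hi⟩ := hp
        rw [← hi]
        simp
      · intro p hp
        simp only [Finset.mem_image, Finset.mem_univ, true_and] at hp
        show (if (finProdFinEquiv.symm p).2 = a then (1 : F) else 0) = 0
        rw [if_neg]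
        intro h
        exact hp ⟨(finProdFinEquiv.symm p).1, by
          rw [show ((finProdFinEquiv.symm p).1, a) = finProdFinEquiv.symm p from by
            rw [← h], Equiv.apply_symm_apply]⟩
      · intro c hc
        have hblock := ((mem_C_iff m v c).mp hc).1 a
        rw [← Equiv.sum_comp finProdFinEquiv
          (fun p => (if (finProdFinEquiv.symm p).2 = a then (1 : F) else 0) * c p)]
        have hterm : ∀ pr : Fin 4 × Fin m,
            (if (finProdFinEquiv.symm (finProdFinEquiv pr)).2 = a then (1 : F) else 0)
              * c (finProdFinEquiv pr)
            = if pr.2 = a then c (finProdFinEquiv pr) else 0 := by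
          intro pr
          rw [Equiv.symm_apply_apply]
          by_cases h : pr.2 = a <;> simp [h]
        rw [Fintype.sum_congr _ _ hterm, Fintype.sum_prod_type]
        have hinner : ∀ i : Fin 4,
            (∑ b, if b = a then c (finProdFinEquiv (i, b)) else 0)
              = res m a c i := by
          intro i
          rw [Finset.sum_ite_eq' Finset.univ a]
          simp [res]
        rw [Fintype.sum_congr _ _ hinner]
        exact hblock
  -- 5. arithmetic
  · have h3 : ((3 * m - 3) + 2) / 3 = m - 1 := by
      have he : (3 * m - 3) + 2 = 3 * (m - 1) + 2 := by omega
      rw [he, Nat.mul_add_div (by norm_num)]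
      norm_num
    omega

set_option maxHeartbeats 800000 in
/-- main theorem -/
theorem stmt_17 (q m : ℕ) (hm : 2 ≤ m) (F : Type) [Field F] [Fintype F]
    (hcard : Fintype.card F = q)
    (S : Fin m → Set (Projectivization F (Fin 3 → F)))
    (hdisj : ∀ a b, a ≠ b → Disjoint (S a) (S b))
    (hcard4 : ∀ a, (S a).ncard = 4)
    (harc : ∀ a b, a ≠ b → ∀ p₁ ∈ S a ∪ S b, ∀ p₂ ∈ S a ∪ S b, ∀ p₃ ∈ S a ∪ S b,
      p₁ ≠ p₂ → p₁ ≠ p₃ → p₂ ≠ p₃ →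
      LinearIndependent F ![p₁.rep, p₂.rep, p₃.rep]) :
    ∃ C : Submodule F (Fin (4 * m) → F),
      Module.finrank F C = 3 * m - 3 ∧
      (∀ c : Fin (4 * m) → F, c ∈ C → c ≠ 0 → 6 ≤ Set.ncard {i | c i ≠ 0}) ∧
      (∃ c : Fin (4 * m) → F, c ∈ C ∧ c ≠ 0 ∧ Set.ncard {i | c i ≠ 0} = 6) ∧
      (∃ B : Fin m → Finset (Fin (4 * m)),
        (∀ a b, a ≠ b → Disjoint (B a) (B b)) ∧
        (∀ a, (B a).card = 4) ∧
        (Finset.univ.biUnion B = Finset.univ) ∧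
        ∀ a, ∃ v : Fin (4 * m) → F,
          (∀ i ∈ B a, v i ≠ 0) ∧ (∀ i ∉ B a, v i = 0) ∧
          ∀ c : Fin (4 * m) → F, c ∈ C → ∑ i, v i * c i = 0) ∧
      (6 : ℕ) = 4 * m - (3 * m - 3) - ((3 * m - 3) + 2) / 3 + 2 := by
  classical
  have hσ : ∀ a : Fin m, ∃ σ : Fin 4 → Projectivization F (Fin 3 → F),
      Function.Injective σ ∧ ∀ i, σ i ∈ S a := by
    intro a
    have hfin : (S a).Finite := Set.finite_of_ncard_ne_zero (by rw [hcard4 a]; norm_num)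
    have hcardF : hfin.toFinset.card = 4 := by
      rw [← Set.ncard_eq_toFinset_card _ hfin, hcard4 a]
    let e := Finset.equivFinOfCardEq hcardF
    refine ⟨fun i => (e.symm i : _), ?_, ?_⟩
    · intro i j h
      exact e.symm.injective (Subtype.coe_injective h)
    · intro i
      exact hfin.mem_toFinset.mp (e.symm i).2
  choose σ hσinj hσmem using hσ
  have hexists_ne : ∀ a : Fin m, ∃ b, a ≠ b := by
    intro a
    by_cases h : a = ⟨0, by omega⟩
    · exact ⟨⟨1, by omega⟩, by rw [h]; exact Fin.ne_of_val_ne (by norm_num)⟩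
    · exact ⟨⟨0, by omega⟩, fun hh => h hh⟩
  have hdistinct : ∀ (a b : Fin m) (i j : Fin 4), a ≠ b → σ a i ≠ σ b j := by
    intro a b i j hab h
    have h1 : σ a i ∈ S a := hσmem a i
    have h2 : σ a i ∈ S b := h ▸ hσmem b j
    exact Set.disjoint_left.mp (hdisj a b hab) h1 h2
  have h1 : ∀ a, ∀ i j k : Fin 4, i ≠ j → i ≠ k → j ≠ k →
      LinearIndependent F ![(σ a i).rep, (σ a j).rep, (σ a k).rep] := by
    intro a i j k hij hik hjk
    obtain ⟨b, hb⟩ := hexists_ne a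
    exact harc a b hb (σ a i) (Set.mem_union_left _ (hσmem a i))
      (σ a j) (Set.mem_union_left _ (hσmem a j))
      (σ a k) (Set.mem_union_left _ (hσmem a k))
      (fun h => hij (hσinj a h)) (fun h => hik (hσinj a h)) (fun h => hjk (hσinj a h))
  have h2 : ∀ a b, a ≠ b → ∀ i j : Fin 4, i ≠ j → ∀ k,
      LinearIndependent F ![(σ a i).rep, (σ a j).rep, (σ b k).rep] := by
    intro a b hab i j hij k
    exact harc a b hab (σ a i) (Set.mem_union_left _ (hσmem a i))
      (σ a j) (Set.mem_union_left _ (hσmem a j))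
      (σ b k) (Set.mem_union_right _ (hσmem b k))
      (fun h => hij (hσinj a h)) (hdistinct a b i k hab) (hdistinct a b j k hab)
  letI : DecidableEq F := Classical.decEq F
  exact stmt_17_aux m hm (fun a i => (σ a i).rep) h1 h2
end
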